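/- arXiv:2106.10723 — 10 statements merged into one kernel-verified Lean document; each statement's English description precedes it below -/
import Mathlib

section
/- For every real y > 0, the map λ ↦ T(y,λ) is differentiable at every λ ∈ ℝ, its derivative at λ equals D(y,λ), and D(y,λ) ≥ 0 for all λ ∈ ℝ (so λ ↦ T(y,λ) is monotone nondecreasing). -/
/-- The Box–Cox transformation `T(y, λ)`. -/
noncomputable def boxCox (y lam : ℝ) : ℝ :=
  if lam = 0 then Real.log y else (y ^ lam - 1) / lam

/-- `D(y, λ)`, the derivative of the Box–Cox transformation in `λ`. -/
noncomputable def boxCoxDeriv (y lam : ℝ) : ℝ :=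
  if lam = 0 then (1 / 2) * Real.log y ^ 2
  else (lam ^ 2)⁻¹ * (y ^ lam * (lam * Real.log y - 1) + 1)

/-! For `λ ≠ 0` the derivative is the quotient rule applied to `(y ^ λ - 1) / λ`. At `λ = 0`,
with `c = log y`, the difference quotient is `(exp (λ c) - 1 - λ c) / λ ^ 2`, which tends to
`c ^ 2 / 2` by the second-order Taylor expansion of `exp`. The sign of `D` is that of
`exp t * (t - 1) + 1` with `t = λ log y`, which is `1 - t ≤ exp (-t)` multiplied by `exp t`. -/

open Real Filter Asymptotics Topology

theorem Real.tendsto_exp_mul_sub_one_sub_div_sq (c : ℝ) :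
    Tendsto (fun l => (exp (l * c) - 1 - l * c) / l ^ 2) (𝓝[≠] 0) (𝓝 (c ^ 2 / 2)) := by
  have hlin : Tendsto (fun l : ℝ => l * c) (𝓝 0) (𝓝 0) := by
    simpa using (tendsto_id (x := 𝓝 (0 : ℝ))).mul_const c
  have hrem : (fun l : ℝ => exp (l * c) - 1 - l * c - (l * c) ^ 2 / 2) =o[𝓝 0] (· ^ 2) := by
    have h := (exp_sub_sum_range_succ_isLittleO_pow 2).comp_tendsto hlin
    refine (h.congr_left fun l => ?_).trans_isBigO (isBigO_of_le' (c := c ^ 2) _ fun l => ?_)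
    · simp [Finset.sum_range_succ, sub_sub]
    · simp [mul_pow, mul_comm]
  have hdiv := (hrem.tendsto_div_nhds_zero.mono_left (nhdsWithin_le_nhds (s := {0}ᶜ))).add_const
    (c ^ 2 / 2)
  rw [zero_add] at hdiv
  refine hdiv.congr' (eventually_nhdsWithin_of_forall fun l (hl : l ≠ 0) => ?_)
  field_simp
  ring

theorem Real.exp_mul_sub_one_add_one_nonneg (t : ℝ) : 0 ≤ exp t * (t - 1) + 1 := by
  have h := mul_le_mul_of_nonneg_left (add_one_le_exp (-t)) (exp_pos t).le
  rw [← exp_add, add_neg_cancel, exp_zero] at h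
  linarith

section BoxCox

variable {y : ℝ}

theorem boxCox_hasDerivAt_of_ne_zero (hy : 0 < y) {lam : ℝ} (h : lam ≠ 0) :
    HasDerivAt (boxCox y) (boxCoxDeriv y lam) lam := by
  have hquot : HasDerivAt (fun l => (y ^ l - 1) / l)
      ((log y * 1 * y ^ lam * lam - (y ^ lam - 1) * 1) / lam ^ 2) lam :=
    (((hasDerivAt_id lam).const_rpow hy).sub_const 1).div (hasDerivAt_id lam) h
  have heq : (fun l => (y ^ l - 1) / l) =ᶠ[𝓝 lam] boxCox y :=
    eventually_ne_nhds h |>.mono fun l hl => (if_neg hl).symm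
  rw [boxCoxDeriv, if_neg h]
  refine (hquot.congr_of_eventuallyEq heq.symm).congr_deriv ?_
  field_simp
  ring

theorem slope_boxCox_zero (hy : 0 < y) {l : ℝ} (hl : l ≠ 0) :
    slope (boxCox y) 0 l = (exp (l * log y) - 1 - l * log y) / l ^ 2 := by
  rw [slope_def_field, boxCox, boxCox, if_neg hl, if_pos rfl, rpow_def_of_pos hy, mul_comm (log y)]
  field_simp
  ring

theorem boxCox_hasDerivAt_zero (hy : 0 < y) : HasDerivAt (boxCox y) (boxCoxDeriv y 0) 0 := by
  rw [hasDerivAt_iff_tendsto_slope]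
  simp only [boxCoxDeriv, if_pos, one_div_mul_eq_div]
  exact (tendsto_exp_mul_sub_one_sub_div_sq (log y)).congr'
    (eventually_nhdsWithin_of_forall fun l hl => (slope_boxCox_zero hy hl).symm)

theorem boxCox_hasDerivAt (hy : 0 < y) (lam : ℝ) :
    HasDerivAt (boxCox y) (boxCoxDeriv y lam) lam := by
  rcases eq_or_ne lam 0 with rfl | h
  · exact boxCox_hasDerivAt_zero hy
  · exact boxCox_hasDerivAt_of_ne_zero hy h

theorem boxCoxDeriv_nonneg (hy : 0 < y) (lam : ℝ) : 0 ≤ boxCoxDeriv y lam := by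
  rw [boxCoxDeriv]
  split_ifs with h
  · positivity
  · have := exp_mul_sub_one_add_one_nonneg (lam * log y)
    rw [rpow_def_of_pos hy, mul_comm (log y)]
    exact mul_nonneg (by positivity) this

end BoxCox

/-- For every `y > 0`, `λ ↦ T(y, λ)` is differentiable everywhere with derivative
`D(y, λ)`, and `D(y, λ) ≥ 0`; consequently `λ ↦ T(y, λ)` is monotone nondecreasing. -/
theorem boxCox_hasDerivAt_boxCoxDeriv_nonneg (y : ℝ) (hy : 0 < y) :
    (∀ lam : ℝ,
      HasDerivAt (fun l : ℝ => boxCox y l) (boxCoxDeriv y lam) lam ∧ 0 ≤ boxCoxDeriv y lam) ∧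
    Monotone (fun l : ℝ => boxCox y l) := by
  have hderiv := boxCox_hasDerivAt hy
  refine ⟨fun lam => ⟨hderiv lam, boxCoxDeriv_nonneg hy lam⟩, ?_⟩
  refine monotone_of_deriv_nonneg (fun lam => (hderiv lam).differentiableAt) fun lam => ?_
  rw [(hderiv lam).deriv]
  exact boxCoxDeriv_nonneg hy lam
end

section
/- For every real y > 0, the map λ ↦ D(y,λ) is differentiable at every λ ∈ ℝ with derivative D₂(y,λ) (so D₂(y,·) is the second derivative of the Box–Cox transformation λ ↦ T(y,λ)); moreover, for every λ ∈ ℝ: D₂(y,λ) > 0 if y > 1, D₂(y,λ) < 0 if 0 < y < 1, and D₂(1,λ) = 0. -/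
open Real intervalIntegral

/-- `D₂(y, λ)`, the second derivative of the Box–Cox transformation `T(y, λ)` in `λ`. -/
noncomputable def boxCoxDeriv2 (y lam : ℝ) : ℝ :=
  if lam = 0 then (1 / 3) * Real.log y ^ 3
  else (lam ^ 3)⁻¹ *
    (y ^ lam * lam ^ 2 * Real.log y ^ 2 - 2 * (y ^ lam * (lam * Real.log y - 1) + 1))

theorem hasDerivAt_intervalIntegral_mul_exp {g : ℝ → ℝ} (hg : Continuous g) (a b lam : ℝ) :
    HasDerivAt (fun l => ∫ t in a..b, g t * exp (l * t))
      (∫ t in a..b, t * g t * exp (lam * t)) lam := by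
  have h_bound : ∀ t, ∀ x ∈ Metric.ball lam 1,
      ‖t * g t * exp (x * t)‖ ≤ |t * g t| * exp ((|lam| + 1) * |t|) := by
    intro t x hx
    have hx : |x| ≤ |lam| + 1 := by
      have := abs_sub_abs_le_abs_sub x lam
      rw [Metric.mem_ball, Real.dist_eq] at hx
      linarith
    have hxt : x * t ≤ (|lam| + 1) * |t| :=
      calc x * t ≤ |x| * |t| := abs_mul x t ▸ le_abs_self _
        _ ≤ (|lam| + 1) * |t| := mul_le_mul_of_nonneg_right hx (abs_nonneg t)
    rw [norm_mul, Real.norm_eq_abs, Real.norm_eq_abs, abs_exp]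
    exact mul_le_mul_of_nonneg_left (exp_le_exp.2 hxt) (abs_nonneg _)
  have h_diff : ∀ t, ∀ x : ℝ,
      HasDerivAt (fun l => g t * exp (l * t)) (t * g t * exp (x * t)) x := by
    intro t x
    have h := (((hasDerivAt_id' x).mul_const t).exp).const_mul (g t)
    exact h.congr_deriv (by ring)
  exact (hasDerivAt_integral_of_dominated_loc_of_deriv_le (Metric.ball_mem_nhds lam one_pos)
    (.of_forall fun _ => (by fun_prop : Continuous _).aestronglyMeasurable)
    ((by fun_prop : Continuous _).intervalIntegrable _ _)
    (by fun_prop : Continuous _).aestronglyMeasurable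
    (.of_forall fun t _ => h_bound t) ((by fun_prop : Continuous _).intervalIntegrable _ _)
    (.of_forall fun t _ x _ => h_diff t x)).2

theorem boxCoxDeriv_exp_eq_integral (L lam : ℝ) :
    boxCoxDeriv (exp L) lam = ∫ t in (0 : ℝ)..L, t * exp (lam * t) := by
  rw [boxCoxDeriv, log_exp, ← exp_mul, mul_comm L]
  split_ifs with h
  · simp only [h, zero_mul, exp_zero, mul_one, integral_id]
    ring
  · have h_anti : ∀ t ∈ Set.uIcc 0 L, HasDerivAt
        (fun t => (lam ^ 2)⁻¹ * (exp (lam * t) * (lam * t - 1))) (t * exp (lam * t)) t := by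
      intro t _
      have hexp := ((hasDerivAt_id' t).const_mul lam).exp
      have hlin := ((hasDerivAt_id' t).const_mul lam).sub_const 1
      exact ((hexp.mul hlin).const_mul _).congr_deriv (by field_simp; ring)
    rw [integral_eq_sub_of_hasDerivAt h_anti ((by fun_prop : Continuous _).intervalIntegrable _ _)]
    simp only [mul_zero, exp_zero]
    ring

theorem boxCoxDeriv2_exp_eq_integral (L lam : ℝ) :
    boxCoxDeriv2 (exp L) lam = ∫ t in (0 : ℝ)..L, t ^ 2 * exp (lam * t) := by
  rw [boxCoxDeriv2, log_exp, ← exp_mul, mul_comm L]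
  split_ifs with h
  · simp only [h, zero_mul, exp_zero, mul_one, integral_pow]
    ring
  · have h_anti : ∀ t ∈ Set.uIcc 0 L, HasDerivAt
        (fun t => (lam ^ 3)⁻¹ * (exp (lam * t) * (lam ^ 2 * t ^ 2 - 2 * lam * t + 2)))
        (t ^ 2 * exp (lam * t)) t := by
      intro t _
      have hexp := ((hasDerivAt_id' t).const_mul lam).exp
      have hquad : HasDerivAt (fun t => lam ^ 2 * t ^ 2 - 2 * lam * t + 2)
          (lam ^ 2 * (2 * t) - 2 * lam) t := by
        simpa using (((hasDerivAt_pow 2 t).const_mul (lam ^ 2)).sub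
          ((hasDerivAt_id' t).const_mul (2 * lam))).add_const 2
      exact ((hexp.mul hquad).const_mul _).congr_deriv (by field_simp; ring)
    rw [integral_eq_sub_of_hasDerivAt h_anti ((by fun_prop : Continuous _).intervalIntegrable _ _)]
    simp only [mul_zero, exp_zero]
    ring

theorem integral_sq_mul_exp_pos {L : ℝ} (hL : 0 < L) (lam : ℝ) :
    0 < ∫ t in (0 : ℝ)..L, t ^ 2 * exp (lam * t) :=
  intervalIntegral_pos_of_pos_on ((by fun_prop : Continuous _).intervalIntegrable _ _)
    (fun t ht => mul_pos (pow_pos ht.1 2) (exp_pos _)) hL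

theorem integral_sq_mul_exp_neg {L : ℝ} (hL : L < 0) (lam : ℝ) :
    ∫ t in (0 : ℝ)..L, t ^ 2 * exp (lam * t) < 0 := by
  rw [integral_symm, neg_lt_zero]
  exact intervalIntegral_pos_of_pos_on ((by fun_prop : Continuous _).intervalIntegrable _ _)
    (fun t ht => mul_pos (sq_pos_of_neg ht.2) (exp_pos _)) hL

/-- For every `y > 0`, `λ ↦ D(y, λ)` is differentiable everywhere with derivative
`D₂(y, λ)`; moreover `D₂(y, λ) > 0` if `y > 1`, `D₂(y, λ) < 0` if `0 < y < 1`, and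
`D₂(1, λ) = 0`. -/
theorem boxCoxDeriv_hasDerivAt_boxCoxDeriv2_sign (y : ℝ) (hy : 0 < y) (lam : ℝ) :
    HasDerivAt (fun l : ℝ => boxCoxDeriv y l) (boxCoxDeriv2 y lam) lam ∧
    (1 < y → 0 < boxCoxDeriv2 y lam) ∧
    (y < 1 → boxCoxDeriv2 y lam < 0) ∧
    boxCoxDeriv2 1 lam = 0 := by
  obtain ⟨L, rfl⟩ : ∃ L, y = exp L := ⟨log y, (exp_log hy).symm⟩
  simp only [boxCoxDeriv_exp_eq_integral, boxCoxDeriv2_exp_eq_integral, one_lt_exp_iff, exp_lt_one_iff]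
  refine ⟨?_, fun hL => integral_sq_mul_exp_pos hL lam, fun hL => integral_sq_mul_exp_neg hL lam,
    by simp [boxCoxDeriv2]⟩
  simpa only [id, ← sq] using hasDerivAt_intervalIntegral_mul_exp continuous_id 0 L lam
end

section
/- Let A₁ and A₂ be real symmetric positive definite n×n matrices, and let Aᵢ^{−1/2} denote the inverse of the unique positive definite square root of Aᵢ. Then ‖A₂^{−1/2} − A₁^{−1/2}‖_Sp ≤ (1/2) · ( max(‖A₁^{−1}‖_Sp, ‖A₂^{−1}‖_Sp) )^{3/2} · ‖A₂ − A₁‖_Sp. -/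
/-!
Write `Xᵢ = Aᵢ^{1/2}` and `M = max ‖A₁⁻¹‖ ‖A₂⁻¹‖`. The C⋆-identity gives `‖Xᵢ⁻¹‖² = ‖Aᵢ⁻¹‖ ≤ M`,
so `Xᵢ ≥ M^{-1/2}` in the Loewner order. The identity `X₂⁻¹ - X₁⁻¹ = X₂⁻¹ (X₁ - X₂) X₁⁻¹`
gives `‖X₂⁻¹ - X₁⁻¹‖ ≤ M ‖X₂ - X₁‖`. The difference `D = X₂ - X₁` solves the Sylvester equation
`X₁ D + D X₂ = A₂ - A₁`; evaluating its quadratic form at an eigenvector of `D` whose eigenvalue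
`μ` has `|μ| = ‖D‖` yields `2 M^{-1/2} ‖D‖ ≤ ‖A₂ - A₁‖`.
-/

open Matrix

/-- The spectral norm (ℓ²→ℓ² operator norm) of a real matrix. -/
noncomputable def spNorm {n m : ℕ} (A : Matrix (Fin n) (Fin m) ℝ) : ℝ :=
  ‖LinearMap.toContinuousLinearMap (Matrix.toEuclideanLin A)‖

/-- The square root of a positive semidefinite matrix, as defined in Mathlib (December 2024),
where it has since been removed. -/
noncomputable def Matrix.PosSemidef.sqrt {n : Type*} [Fintype n] [DecidableEq n]
    {𝕜 : Type*} [RCLike 𝕜] [PartialOrder 𝕜] {A : Matrix n n 𝕜} (hA : A.PosSemidef) : Matrix n n 𝕜 :=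
  hA.1.eigenvectorUnitary.1 * diagonal ((↑) ∘ (√·) ∘ hA.1.eigenvalues) *
    (star hA.1.eigenvectorUnitary : Matrix n n 𝕜)

open scoped Matrix.Norms.L2Operator MatrixOrder RealInnerProductSpace

lemma algebraMap_inv_le_of_norm_inv_le {A : Type*} [NormedRing A] [StarRing A] [NormedAlgebra ℝ A]
    [PartialOrder A] [StarOrderedRing A] [IsometricContinuousFunctionalCalculus ℝ A IsSelfAdjoint]
    [NonnegSpectrumClass ℝ A] (a : Aˣ) (ha : 0 ≤ (a : A)) {r : ℝ} (hr : ‖(↑a⁻¹ : A)‖ ≤ r) :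
    algebraMap ℝ A r⁻¹ ≤ a := by
  rw [algebraMap_le_iff_le_spectrum (ha := .of_nonneg ha)]
  intro x hx
  have hx₀ : 0 < x := lt_of_le_of_ne (spectrum_nonneg_of_nonneg ha hx)
    fun h => a.zero_notMem_spectrum ℝ (h ▸ hx)
  lift x to ℝˣ using hx₀.ne'.isUnit
  have hinv : (↑x⁻¹ : ℝ) ∈ spectrum ℝ (↑a⁻¹ : A) := spectrum.inv_mem_iff.mp hx
  have hle := IsometricContinuousFunctionalCalculus.norm_spectrum_le _ hinv
    (.of_nonneg (CFC.inv_nonneg_of_nonneg a ha))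
  rw [Units.val_inv_eq_inv_val, Real.norm_of_nonneg (inv_nonneg.2 hx₀.le)] at hle
  exact inv_le_of_inv_le₀ hx₀ (hle.trans hr)

namespace Matrix

variable {n : Type*} [Fintype n] [DecidableEq n]

namespace PosSemidef

variable {A : Matrix n n ℝ}

lemma sqrt_mul_self (hA : A.PosSemidef) : hA.sqrt * hA.sqrt = A := by
  unfold Matrix.PosSemidef.sqrt
  conv_rhs => rw [hA.1.spectral_theorem, Unitary.conjStarAlgAut_apply]
  simp only [Matrix.mul_assoc]
  rw [← Matrix.mul_assoc (star _ : Matrix n n ℝ), Unitary.coe_star_mul_self, Matrix.one_mul,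
    ← Matrix.mul_assoc (diagonal _), diagonal_mul_diagonal]
  congr 3
  funext i
  simp [Real.mul_self_sqrt (hA.eigenvalues_nonneg i)]

lemma posSemidef_sqrt (hA : A.PosSemidef) : hA.sqrt.PosSemidef := by
  have h := (posSemidef_diagonal_iff (d := ((↑) ∘ (√·) ∘ hA.1.eigenvalues : n → ℝ))).2
    fun i => by simp [Real.sqrt_nonneg]
  exact h.mul_mul_conjTranspose_same (hA.1.eigenvectorUnitary : Matrix n n ℝ)

end PosSemidef

namespace PosDef

variable {A : Matrix n n ℝ}

lemma isUnit_sqrt (hA : A.PosDef) : IsUnit hA.posSemidef.sqrt := by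
  have h := hA.isUnit
  rw [← hA.posSemidef.sqrt_mul_self, isUnit_iff_isUnit_det, det_mul] at h
  exact (isUnit_iff_isUnit_det _).2 (isUnit_of_mul_isUnit_left h)

lemma norm_sqrt_inv (hA : A.PosDef) : ‖hA.posSemidef.sqrt⁻¹‖ = √‖A⁻¹‖ := by
  have hsq : hA.posSemidef.sqrt⁻¹ᴴ * hA.posSemidef.sqrt⁻¹ = A⁻¹ := by
    rw [hA.posSemidef.posSemidef_sqrt.inv.isHermitian.eq, ← mul_inv_rev,
      hA.posSemidef.sqrt_mul_self]
  rw [← hsq, l2_opNorm_conjTranspose_mul_self, Real.sqrt_mul_self (norm_nonneg _)]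

lemma algebraMap_inv_sqrt_le_sqrt (hA : A.PosDef) {r : ℝ} (hr : ‖A⁻¹‖ ≤ r) :
    algebraMap ℝ _ (√r)⁻¹ ≤ hA.posSemidef.sqrt := by
  refine algebraMap_inv_le_of_norm_inv_le hA.isUnit_sqrt.unit
    hA.posSemidef.posSemidef_sqrt.nonneg ?_
  rw [coe_units_inv, IsUnit.unit_spec, hA.norm_sqrt_inv]
  exact Real.sqrt_le_sqrt hr

end PosDef

lemma le_inner_toEuclideanCLM_of_algebraMap_le {X : Matrix n n ℝ} {c : ℝ}
    (h : algebraMap ℝ _ c ≤ X) (x : EuclideanSpace ℝ n) :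
    c * ‖x‖ ^ 2 ≤ ⟪x, toEuclideanCLM (𝕜 := ℝ) X x⟫ := by
  have hpos := (isPositive_toEuclideanLin_iff.2 h).inner_nonneg_right x
  simp only [Algebra.algebraMap_eq_smul_one, map_sub, map_smul, toLpLin_one, LinearMap.sub_apply,
    LinearMap.smul_apply, LinearMap.id_coe, id_eq, inner_sub_right, inner_smul_right,
    inner_self_eq_norm_sq_to_K, Real.ringHom_apply, sub_nonneg] at hpos
  exact hpos

lemma abs_inner_toEuclideanCLM_le (B : Matrix n n ℝ) (x : EuclideanSpace ℝ n) :
    |⟪x, toEuclideanCLM (𝕜 := ℝ) B x⟫| ≤ ‖B‖ * ‖x‖ ^ 2 := by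
  calc _ ≤ ‖x‖ * ‖toEuclideanCLM (𝕜 := ℝ) B x‖ := abs_real_inner_le_norm _ _
    _ ≤ ‖x‖ * (‖B‖ * ‖x‖) := by gcongr; exact (toEuclideanCLM (𝕜 := ℝ) B).le_opNorm x
    _ = ‖B‖ * ‖x‖ ^ 2 := by ring

lemma IsHermitian.exists_eigenvector_abs_eq_norm [Nonempty n] {D : Matrix n n ℝ}
    (hD : D.IsHermitian) :
    ∃ μ : ℝ, |μ| = ‖D‖ ∧
      ∃ x : EuclideanSpace ℝ n, x ≠ 0 ∧ toEuclideanCLM (𝕜 := ℝ) D x = μ • x := by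
  obtain ⟨⟨μ, hμ, hμD⟩, -⟩ :=
    IsometricContinuousFunctionalCalculus.isGreatest_norm_spectrum (𝕜 := ℝ) D hD.isSelfAdjoint
  rw [← spectrum_toLpLin 2, ← Module.End.hasEigenvalue_iff_mem_spectrum] at hμ
  obtain ⟨x, hx⟩ := hμ.exists_hasEigenvector
  exact ⟨μ, hμD, x, hx.2, hx.apply_eq_smul⟩

theorem two_mul_mul_norm_le_norm_mul_add_mul {X₁ X₂ D : Matrix n n ℝ} (hD : D.IsHermitian)
    {c : ℝ} (h₁ : algebraMap ℝ _ c ≤ X₁) (h₂ : algebraMap ℝ _ c ≤ X₂) :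
    2 * c * ‖D‖ ≤ ‖X₁ * D + D * X₂‖ := by
  cases isEmpty_or_nonempty n
  · simp [Subsingleton.elim D 0]
  obtain ⟨μ, hμ, x, hx, hDx⟩ := hD.exists_eigenvector_abs_eq_norm
  have hDsa : IsSelfAdjoint (toEuclideanCLM (𝕜 := ℝ) D) := hD.isSelfAdjoint.map _
  have hquad : ⟪x, toEuclideanCLM (𝕜 := ℝ) (X₁ * D + D * X₂) x⟫ =
      μ * (⟪x, toEuclideanCLM (𝕜 := ℝ) X₁ x⟫ + ⟪x, toEuclideanCLM (𝕜 := ℝ) X₂ x⟫) := by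
    rw [map_add, map_mul, map_mul, _root_.add_apply, mul_apply_eq_comp, mul_apply_eq_comp,
      inner_add_right, hDx, map_smul, inner_smul_right,
      ← ContinuousLinearMap.adjoint_inner_left (toEuclideanCLM (𝕜 := ℝ) D), hDsa.adjoint_eq, hDx,
      real_inner_smul_left, mul_add]
  have hx₀ : 0 < ‖x‖ ^ 2 := by positivity
  refine le_of_mul_le_mul_right ?_ hx₀
  calc 2 * c * ‖D‖ * ‖x‖ ^ 2 = |μ| * (c * ‖x‖ ^ 2 + c * ‖x‖ ^ 2) := by rw [hμ]; ring
    _ ≤ |μ| * (⟪x, toEuclideanCLM (𝕜 := ℝ) X₁ x⟫ + ⟪x, toEuclideanCLM (𝕜 := ℝ) X₂ x⟫) := by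
      gcongr
      · exact le_inner_toEuclideanCLM_of_algebraMap_le h₁ x
      · exact le_inner_toEuclideanCLM_of_algebraMap_le h₂ x
    _ ≤ |⟪x, toEuclideanCLM (𝕜 := ℝ) (X₁ * D + D * X₂) x⟫| := by
      rw [hquad, abs_mul]
      gcongr
      exact le_abs_self _
    _ ≤ ‖X₁ * D + D * X₂‖ * ‖x‖ ^ 2 := abs_inner_toEuclideanCLM_le _ x

lemma norm_inv_sub_inv_le {𝕜 : Type*} [RCLike 𝕜] {A B : Matrix n n 𝕜} (h : IsUnit A ↔ IsUnit B) :
    ‖A⁻¹ - B⁻¹‖ ≤ ‖A⁻¹‖ * ‖A - B‖ * ‖B⁻¹‖ := by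
  rw [inv_sub_inv h, norm_sub_rev A]
  exact (norm_mul_le _ _).trans (by gcongr; exact norm_mul_le _ _)

lemma PosDef.two_mul_inv_sqrt_mul_norm_sqrt_sub_sqrt_le {A₁ A₂ : Matrix n n ℝ} (hA₁ : A₁.PosDef)
    (hA₂ : A₂.PosDef) {r : ℝ} (h₁ : ‖A₁⁻¹‖ ≤ r) (h₂ : ‖A₂⁻¹‖ ≤ r) :
    2 * (√r)⁻¹ * ‖hA₂.posSemidef.sqrt - hA₁.posSemidef.sqrt‖ ≤ ‖A₂ - A₁‖ := by
  set X₁ := hA₁.posSemidef.sqrt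
  set X₂ := hA₂.posSemidef.sqrt
  have h := two_mul_mul_norm_le_norm_mul_add_mul
    (hA₂.posSemidef.posSemidef_sqrt.isHermitian.sub hA₁.posSemidef.posSemidef_sqrt.isHermitian)
    (hA₁.algebraMap_inv_sqrt_le_sqrt h₁) (hA₂.algebraMap_inv_sqrt_le_sqrt h₂)
  rwa [show X₁ * (X₂ - X₁) + (X₂ - X₁) * X₂ = X₂ * X₂ - X₁ * X₁ by noncomm_ring,
    hA₁.posSemidef.sqrt_mul_self, hA₂.posSemidef.sqrt_mul_self] at h

end Matrix

/-- For real symmetric positive definite matrices `A₁, A₂`, with `Aᵢ^{-1/2}` the inverse of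
the (unique) positive definite square root of `Aᵢ`,
`‖A₂^{-1/2} - A₁^{-1/2}‖ ≤ (1/2) · max(‖A₁⁻¹‖, ‖A₂⁻¹‖)^{3/2} · ‖A₂ - A₁‖` in spectral norm. -/
theorem spNorm_inv_sqrt_sub_inv_sqrt_le {n : ℕ} {A₁ A₂ : Matrix (Fin n) (Fin n) ℝ}
    (hA₁ : A₁.PosDef) (hA₂ : A₂.PosDef) :
    spNorm (hA₂.posSemidef.sqrt⁻¹ - hA₁.posSemidef.sqrt⁻¹) ≤
      (1 / 2) * max (spNorm A₁⁻¹) (spNorm A₂⁻¹) ^ ((3 : ℝ) / 2) * spNorm (A₂ - A₁) := by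
  change ‖_‖ ≤ 1 / 2 * max ‖A₁⁻¹‖ ‖A₂⁻¹‖ ^ ((3 : ℝ) / 2) * ‖A₂ - A₁‖
  set M := max ‖A₁⁻¹‖ ‖A₂⁻¹‖
  set d := ‖hA₂.posSemidef.sqrt - hA₁.posSemidef.sqrt‖
  have hsqrt : 2 * (√M)⁻¹ * d ≤ ‖A₂ - A₁‖ :=
    hA₁.two_mul_inv_sqrt_mul_norm_sqrt_sub_sqrt_le hA₂ (le_max_left _ _) (le_max_right _ _)
  calc _ ≤ ‖hA₂.posSemidef.sqrt⁻¹‖ * d * ‖hA₁.posSemidef.sqrt⁻¹‖ :=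
        norm_inv_sub_inv_le (iff_of_true hA₂.isUnit_sqrt hA₁.isUnit_sqrt)
    _ ≤ √M * d * √M := by
        rw [hA₁.norm_sqrt_inv, hA₂.norm_sqrt_inv]
        gcongr
        exacts [le_max_right _ _, le_max_left _ _]
    _ ≤ 1 / 2 * √M ^ 3 * ‖A₂ - A₁‖ := by
        rcases (Real.sqrt_nonneg M).eq_or_lt with h0 | hpos
        · simp [← h0]
        · calc √M * d * √M = 1 / 2 * √M ^ 3 * (2 * (√M)⁻¹ * d) := by field_simp
            _ ≤ 1 / 2 * √M ^ 3 * ‖A₂ - A₁‖ := by gcongr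
    _ = 1 / 2 * M ^ ((3 : ℝ) / 2) * ‖A₂ - A₁‖ := by
        rw [Real.rpow_div_two_eq_sqrt _ (le_max_of_le_left (norm_nonneg _))]
        norm_cast
end

section
/- Let w₁, …, w_n ∈ ℝ^m be points (not necessarily distinct), let d ∈ ℝ^m have strictly positive entries, and let a ∈ ℝⁿ. Then the function w ↦ |∑_{j=1}^n a_j · exp(2i⟨w, w_j⟩)|² · exp(−∑_{k=1}^m w_k²/d_k) is Lebesgue-integrable on ℝ^m and aᵀ Ω(d) a = π^{−m/2} · (∏_{k=1}^m d_k)^{−1/2} · ∫_{ℝ^m} |∑_{j=1}^n a_j · exp(2i⟨w, w_j⟩)|² · exp(−∑_{k=1}^m w_k²/d_k) dw, where ⟨·,·⟩ is the Euclidean inner product on ℝ^m, i is the imaginary unit, and |z| is the modulus of the complex number z. In particular aᵀ Ω(d) a ≥ 0. -/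
/-! Writing `e_v(x) = exp(2i⟨x, v⟩)`, the square `|∑ⱼ aⱼ e_{wⱼ}(x)|²` expands to
`∑ᵢⱼ aᵢ aⱼ e_{wᵢ - wⱼ}(x)`, and the Fourier transform of the Gaussian `exp(-∑ₖ xₖ²/dₖ)` at the
frequency `2(wᵢ - wⱼ)` is `π^{m/2} (∏ₖ dₖ)^{1/2} Ω(d)ᵢⱼ`. Integrating term by term turns the
integral into a positive multiple of `aᵀ Ω(d) a`, which is therefore nonnegative. -/

open Matrix MeasureTheory

/-- The Gaussian Gram matrix of the points `w 0, …, w (n-1) ∈ ℝ^m` with weights `d`: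
`Ω(d)_{ij} = exp(-∑ₖ dₖ (wᵢₖ - wⱼₖ)²)`. -/
noncomputable def gaussGram {n m : ℕ} (w : Fin n → Fin m → ℝ) (d : Fin m → ℝ) :
    Matrix (Fin n) (Fin n) ℝ :=
  Matrix.of fun i j => Real.exp (-∑ k, d k * (w i k - w j k) ^ 2)

open Complex ComplexConjugate Real

section ModulatedGaussian

variable {ι : Type*} [Fintype ι]

noncomputable def modulatedGaussian (d v x : ι → ℝ) : ℂ :=
  cexp (2 * I * ((∑ k, x k * v k : ℝ) : ℂ)) * (rexp (-∑ k, x k ^ 2 / d k) : ℂ)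

lemma modulatedGaussian_eq_cexp_quadratic (d v x : ι → ℝ) :
    modulatedGaussian d v x =
      cexp (-∑ k, ((d k)⁻¹ : ℂ) * (x k : ℂ) ^ 2 + ∑ k, 2 * I * v k * x k) := by
  rw [modulatedGaussian, ofReal_exp, ← Complex.exp_add, add_comm]
  push_cast
  simp only [Finset.mul_sum, div_eq_inv_mul]
  congr 2
  exact Finset.sum_congr rfl fun k _ => by ring

lemma integrable_modulatedGaussian {d : ι → ℝ} (hd : ∀ k, 0 < d k) (v : ι → ℝ) :
    Integrable (modulatedGaussian d v) := by
  simp_rw [funext (modulatedGaussian_eq_cexp_quadratic d v)]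
  exact GaussianFourier.integrable_cexp_neg_sum_mul_add (b := fun k => ((d k)⁻¹ : ℂ))
    (fun k => by simpa using hd k) _

lemma integral_modulatedGaussian {d : ι → ℝ} (hd : ∀ k, 0 < d k) (v : ι → ℝ) :
    ∫ x, modulatedGaussian d v x =
      ((∏ k, (π * d k) ^ (1 / 2 : ℝ) : ℝ) : ℂ) * (rexp (-∑ k, d k * v k ^ 2) : ℂ) := by
  simp_rw [modulatedGaussian_eq_cexp_quadratic d v,
    GaussianFourier.integral_cexp_neg_sum_mul_add (b := fun k => ((d k)⁻¹ : ℂ))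
    fun k => by simpa using hd k, Finset.prod_mul_distrib,
    ofReal_prod, ofReal_exp, ← Complex.exp_sum, ofReal_neg, ofReal_sum, ← Finset.sum_neg_distrib]
  congr 1
  · refine Finset.prod_congr rfl fun k _ => ?_
    rw [ofReal_cpow (mul_pos pi_pos (hd k)).le, div_inv_eq_mul]
    push_cast
    rfl
  · congr 1
    refine Finset.sum_congr rfl fun k _ => ?_
    have hdk : (d k : ℂ) ≠ 0 := ofReal_ne_zero.mpr (hd k).ne'
    push_cast
    field_simp
    rw [I_sq]
    ring

end ModulatedGaussian

lemma ofReal_sq_norm_sum_ofReal_mul {κ : Type*} [Fintype κ] (a : κ → ℝ) (z : κ → ℂ) :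
    ((‖∑ i, (a i : ℂ) * z i‖ ^ 2 : ℝ) : ℂ) =
      ∑ i, ∑ j, ((a i * a j : ℝ) : ℂ) * (z i * conj (z j)) := by
  rw [ofReal_pow, ← mul_conj', map_sum, Finset.sum_mul_sum]
  refine Finset.sum_congr rfl fun i _ => Finset.sum_congr rfl fun j _ => ?_
  rw [map_mul, conj_ofReal]
  push_cast
  ring

lemma cexp_two_I_mul_conj (s t : ℝ) :
    cexp (2 * I * s) * conj (cexp (2 * I * t)) = cexp (2 * I * ((s - t : ℝ) : ℂ)) := by
  rw [← Complex.exp_conj, ← Complex.exp_add]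
  simp only [map_mul, map_ofNat, conj_ofReal, conj_I, ofReal_sub]
  ring_nf

lemma ofReal_sq_norm_sum_mul_gaussian {ι κ : Type*} [Fintype ι] [Fintype κ]
    (w : κ → ι → ℝ) (d : ι → ℝ) (a : κ → ℝ) (x : ι → ℝ) :
    ((‖∑ i, (a i : ℂ) * cexp (2 * I * ((∑ k, x k * w i k : ℝ) : ℂ))‖ ^ 2 *
        rexp (-∑ k, x k ^ 2 / d k) : ℝ) : ℂ) =
      ∑ i, ∑ j, ((a i * a j : ℝ) : ℂ) * modulatedGaussian d (w i - w j) x := by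
  rw [ofReal_mul, ofReal_sq_norm_sum_ofReal_mul, Finset.sum_mul]
  refine Finset.sum_congr rfl fun i _ => ?_
  rw [Finset.sum_mul]
  refine Finset.sum_congr rfl fun j _ => ?_
  rw [cexp_two_I_mul_conj, mul_assoc, modulatedGaussian]
  simp only [Pi.sub_apply, mul_sub, Finset.sum_sub_distrib]

lemma integrable_quadratic_modulatedGaussian {ι κ : Type*} [Fintype ι] [Fintype κ]
    (w : κ → ι → ℝ) {d : ι → ℝ} (hd : ∀ k, 0 < d k) (a : κ → ℝ) :
    Integrable fun x => ∑ i, ∑ j, ((a i * a j : ℝ) : ℂ) * modulatedGaussian d (w i - w j) x :=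
  integrable_finsetSum _ fun _ _ => integrable_finsetSum _ fun _ _ =>
    (integrable_modulatedGaussian hd _).const_mul _

lemma integral_modulatedGaussian_sub {n m : ℕ} (w : Fin n → Fin m → ℝ) {d : Fin m → ℝ}
    (hd : ∀ k, 0 < d k) (i j : Fin n) :
    ∫ x, modulatedGaussian d (w i - w j) x =
      ((∏ k, (π * d k) ^ (1 / 2 : ℝ) : ℝ) : ℂ) * (gaussGram w d i j : ℂ) := by
  rw [integral_modulatedGaussian hd]
  rfl

lemma integral_quadratic_modulatedGaussian {n m : ℕ} (w : Fin n → Fin m → ℝ) {d : Fin m → ℝ}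
    (hd : ∀ k, 0 < d k) (a : Fin n → ℝ) :
    ∫ x, ∑ i, ∑ j, ((a i * a j : ℝ) : ℂ) * modulatedGaussian d (w i - w j) x =
      ((∏ k, (π * d k) ^ (1 / 2 : ℝ) : ℝ) : ℂ) * ((a ⬝ᵥ (gaussGram w d *ᵥ a) : ℝ) : ℂ) := by
  have hij (i j) := (integrable_modulatedGaussian hd (w i - w j)).const_mul ((a i * a j : ℝ) : ℂ)
  rw [integral_finsetSum _ fun i _ => integrable_finsetSum _ fun j _ => hij i j]
  simp_rw [integral_finsetSum _ fun j _ => hij _ j, integral_const_mul,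
    integral_modulatedGaussian_sub w hd]
  simp only [dotProduct, mulVec, Finset.mul_sum, ofReal_sum, ofReal_mul]
  refine Finset.sum_congr rfl fun i _ => Finset.sum_congr rfl fun j _ => by ring

lemma rpow_neg_half_mul_prod_rpow_half_eq_one {m : ℕ} {d : Fin m → ℝ} (hd : ∀ k, 0 < d k) :
    π ^ (-(m : ℝ) / 2) * (∏ k, d k) ^ (-(1 : ℝ) / 2) * ∏ k, (π * d k) ^ (1 / 2 : ℝ) = 1 := by
  have hP : 0 < ∏ k, d k := Finset.prod_pos fun k _ => hd k
  rw [Real.finsetProd_rpow _ _ fun k _ => (mul_pos pi_pos (hd k)).le, Finset.prod_mul_distrib,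
    Finset.prod_const, Finset.card_univ, Fintype.card_fin, Real.mul_rpow (by positivity) hP.le,
    ← Real.rpow_natCast, ← Real.rpow_mul pi_pos.le, mul_mul_mul_comm, ← Real.rpow_add pi_pos,
    ← Real.rpow_add hP, show -(m : ℝ) / 2 + m * (1 / 2) = 0 by ring,
    show -(1 : ℝ) / 2 + 1 / 2 = 0 by ring, Real.rpow_zero, Real.rpow_zero, one_mul]

/-- Fourier representation of the Gaussian quadratic form: the integrand is integrable and
`aᵀ Ω(d) a = π^{-m/2} (∏ₖ dₖ)^{-1/2} ∫ |∑ⱼ aⱼ e^{2i⟨x, wⱼ⟩}|² e^{-∑ₖ xₖ²/dₖ} dx ≥ 0`. -/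
theorem gaussGram_quadform_fourier {n m : ℕ} (w : Fin n → Fin m → ℝ)
    (d : Fin m → ℝ) (hd : ∀ k, 0 < d k) (a : Fin n → ℝ) :
    Integrable (fun x : Fin m → ℝ =>
      ‖∑ j, (a j : ℂ) *
          Complex.exp (2 * Complex.I * ((∑ k, x k * w j k : ℝ) : ℂ))‖ ^ 2 *
        Real.exp (-∑ k, x k ^ 2 / d k)) volume ∧
    a ⬝ᵥ (gaussGram w d *ᵥ a) =
      Real.pi ^ (-(m : ℝ) / 2) * (∏ k, d k) ^ (-(1 : ℝ) / 2) *
        ∫ x : Fin m → ℝ,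
          ‖∑ j, (a j : ℂ) *
              Complex.exp (2 * Complex.I * ((∑ k, x k * w j k : ℝ) : ℂ))‖ ^ 2 *
            Real.exp (-∑ k, x k ^ 2 / d k) ∧
    0 ≤ a ⬝ᵥ (gaussGram w d *ᵥ a) := by
  set F : (Fin m → ℝ) → ℝ := fun x =>
    ‖∑ j, (a j : ℂ) * cexp (2 * I * ((∑ k, x k * w j k : ℝ) : ℂ))‖ ^ 2 *
      rexp (-∑ k, x k ^ 2 / d k)
  have hF : (fun x => (F x : ℂ)) =
      fun x => ∑ i, ∑ j, ((a i * a j : ℝ) : ℂ) * modulatedGaussian d (w i - w j) x :=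
    funext (ofReal_sq_norm_sum_mul_gaussian w d a)
  have hF_int : Integrable F := by
    have h : Integrable fun x => (F x : ℂ) := hF ▸ integrable_quadratic_modulatedGaussian w hd a
    simpa using h.re
  have hF_integral : ∫ x, F x = (∏ k, (π * d k) ^ (1 / 2 : ℝ)) * (a ⬝ᵥ (gaussGram w d *ᵥ a)) := by
    apply ofReal_injective
    rw [ofReal_mul, ← integral_quadratic_modulatedGaussian w hd, ← hF]
    exact integral_ofReal.symm
  have hQ : a ⬝ᵥ (gaussGram w d *ᵥ a) =
      π ^ (-(m : ℝ) / 2) * (∏ k, d k) ^ (-(1 : ℝ) / 2) * ∫ x, F x := by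
    rw [hF_integral, ← mul_assoc, rpow_neg_half_mul_prod_rpow_half_eq_one hd, one_mul]
  refine ⟨hF_int, hQ, ?_⟩
  rw [hQ]
  have hP : 0 < ∏ k, d k := Finset.prod_pos fun k _ => hd k
  exact mul_nonneg (by positivity) (integral_nonneg fun x => by positivity)
end

section
/- Let w₁, …, w_n ∈ ℝ^m be points, let 0 < d_L ≤ d_U, and let d ∈ ℝ^m satisfy d_L ≤ d_k ≤ d_U for every k. Then for every a ∈ ℝⁿ: 0 ≤ (d_L/d_U)^{m/2} · aᵀ Ω(d_L·𝟙) a ≤ aᵀ Ω(d) a ≤ (d_U/d_L)^{m/2} · aᵀ Ω(d_U·𝟙) a, where d_L·𝟙 and d_U·𝟙 denote the vectors in ℝ^m with all entries equal to d_L and d_U respectively. -/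
open Matrix

/-!
By the Fourier transform of the Gaussian,
`∏ₖ √(4π dₖ) · exp(-∑ₖ dₖ xₖ²) = ∫ exp(-∑ₖ vₖ²/(4dₖ)) e^{i⟨v, x⟩} dv`, hence
`∏ₖ √(4π dₖ) · aᵀΩ(d)a = ∫ exp(-∑ₖ vₖ²/(4dₖ)) |∑ⱼ aⱼ e^{i⟨v, wⱼ⟩}|² dv`.
The right-hand side is nonnegative and increasing in `d`, and so is the normalizing factor
`∏ₖ √(4π dₖ)`. Comparing `d` with `d_L𝟙` and `d_U𝟙`, the ratios of normalizing factors are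
the powers `(d_L/d_U)^{m/2}` and `(d_U/d_L)^{m/2}`.
-/

open MeasureTheory Real Complex ComplexConjugate

section GaussWeight

variable {ι : Type*} [Fintype ι]

noncomputable def gaussWeight (d v : ι → ℝ) : ℝ :=
  Real.exp (-∑ k, v k ^ 2 / (4 * d k))

lemma gaussWeight_nonneg (d v : ι → ℝ) : 0 ≤ gaussWeight d v := Real.exp_nonneg _

lemma gaussWeight_le_gaussWeight {d d' : ι → ℝ} (hd : ∀ k, 0 < d k) (hdd' : ∀ k, d k ≤ d' k)
    (v : ι → ℝ) : gaussWeight d v ≤ gaussWeight d' v := by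
  refine Real.exp_le_exp.mpr (neg_le_neg (Finset.sum_le_sum fun k _ => ?_))
  have := hd k
  have := hdd' k
  gcongr

lemma integrable_gaussWeight {d : ι → ℝ} (hd : ∀ k, 0 < d k) : Integrable (gaussWeight d) := by
  have hprod : gaussWeight d = fun v => ∏ k, Real.exp (-(1 / (4 * d k)) * v k ^ 2) := by
    ext v
    rw [gaussWeight, ← Real.exp_sum, ← Finset.sum_neg_distrib]
    congr 1
    exact Finset.sum_congr rfl fun k _ => by ring
  rw [hprod]
  exact Integrable.fintype_prod (f := fun k x => Real.exp (-(1 / (4 * d k)) * x ^ 2))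
    fun k => integrable_exp_neg_mul_sq (by have := hd k; positivity)

-- the total mass `∫ gaussWeight d` (the case `x = 0` of `integral_gaussWeight_mul_cexp`)
noncomputable def gaussMass (d : ι → ℝ) : ℝ :=
  ∏ k, √(4 * π * d k)

lemma gaussMass_pos {d : ι → ℝ} (hd : ∀ k, 0 < d k) : 0 < gaussMass d :=
  Finset.prod_pos fun k _ => Real.sqrt_pos.mpr (by have := hd k; positivity)

lemma gaussMass_le_gaussMass {d d' : ι → ℝ} (hdd' : ∀ k, d k ≤ d' k) :
    gaussMass d ≤ gaussMass d' :=
  Finset.prod_le_prod (fun _ _ => Real.sqrt_nonneg _) fun k _ =>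
    Real.sqrt_le_sqrt (by have := hdd' k; have := pi_pos; nlinarith)

lemma div_rpow_card_div_two {c c' : ℝ} (hc : 0 < c) (hc' : 0 < c') :
    (c / c') ^ ((Fintype.card ι : ℝ) / 2) =
      gaussMass (fun _ : ι => c) / gaussMass (fun _ : ι => c') := by
  have hsqrt : √(4 * π * c) / √(4 * π * c') = (c / c') ^ (1 / 2 : ℝ) := by
    rw [← Real.sqrt_div' _ (by positivity), ← Real.sqrt_eq_rpow]
    congr 1
    field_simp
  rw [gaussMass, gaussMass, Finset.prod_const, Finset.prod_const, Finset.card_univ, ← div_pow,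
    hsqrt, ← Real.rpow_natCast, ← Real.rpow_mul (by positivity)]
  ring_nf

lemma integral_gaussWeight_mul_cexp {d : ι → ℝ} (hd : ∀ k, 0 < d k) (x : ι → ℝ) :
    ∫ v, (gaussWeight d v : ℂ) * cexp (↑(v ⬝ᵥ x) * I) =
      ↑(gaussMass d * Real.exp (-∑ k, d k * x k ^ 2)) := by
  have hb : ∀ k, 0 < ((1 / (4 * d k) : ℝ) : ℂ).re := fun k => by
    rw [ofReal_re]; have := hd k; positivity
  have hintegrand : ∀ v, (gaussWeight d v : ℂ) * cexp (↑(v ⬝ᵥ x) * I) =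
      cexp (-∑ k, ((1 / (4 * d k) : ℝ) : ℂ) * (v k : ℂ) ^ 2 + ∑ k, (I * x k) * v k) := by
    intro v
    rw [gaussWeight, ofReal_exp, ← Complex.exp_add, dotProduct]
    push_cast
    rw [Finset.sum_mul]
    congr 2
    · rw [neg_inj]; exact Finset.sum_congr rfl fun k _ => by ring
    · exact Finset.sum_congr rfl fun k _ => by ring
  have hfactor : ∀ k, (↑π / ((1 / (4 * d k) : ℝ) : ℂ)) ^ (1 / 2 : ℂ) *
      cexp ((I * x k) ^ 2 / (4 * ((1 / (4 * d k) : ℝ) : ℂ))) =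
        ↑(√(4 * π * d k) * Real.exp (-(d k * x k ^ 2))) := by
    intro k
    have hbase : ↑π / ((1 / (4 * d k) : ℝ) : ℂ) = ((4 * π * d k : ℝ) : ℂ) := by
      push_cast; field_simp
    have hexp :
        (I * x k) ^ 2 / (4 * ((1 / (4 * d k) : ℝ) : ℂ)) = ((-(d k * x k ^ 2) : ℝ) : ℂ) := by
      push_cast; field_simp; rw [I_sq]; ring
    rw [hbase, hexp, ← ofReal_exp, Real.sqrt_eq_rpow,
      show (1 / 2 : ℂ) = ((1 / 2 : ℝ) : ℂ) by push_cast; ring,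
      ← ofReal_cpow (by have := hd k; positivity), ← ofReal_mul]
  simp_rw [hintegrand]
  rw [GaussianFourier.integral_cexp_neg_sum_mul_add hb, gaussMass,
    Finset.prod_congr rfl fun k _ => hfactor k, ← ofReal_prod, Finset.prod_mul_distrib,
    ← Real.exp_sum, Finset.sum_neg_distrib]

lemma integrable_gaussWeight_mul_cexp {d : ι → ℝ} (hd : ∀ k, 0 < d k) (x : ι → ℝ) :
    Integrable fun v => (gaussWeight d v : ℂ) * cexp (↑(v ⬝ᵥ x) * I) := by
  refine (integrable_gaussWeight hd).ofReal.mul_bdd (c := 1) (by fun_prop) ?_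
  exact Filter.Eventually.of_forall fun v => (norm_exp_ofReal_mul_I _).le

lemma integral_gaussWeight_mul_mono {d d' : ι → ℝ} (hd : ∀ k, 0 < d k) (hdd' : ∀ k, d k ≤ d' k)
    {N : (ι → ℝ) → ℝ} (hN : AEStronglyMeasurable N) (hN0 : ∀ v, 0 ≤ N v) {C : ℝ}
    (hNC : ∀ v, N v ≤ C) :
    ∫ v, gaussWeight d v * N v ≤ ∫ v, gaussWeight d' v * N v := by
  have hd' : ∀ k, 0 < d' k := fun k => (hd k).trans_le (hdd' k)
  refine integral_mono_of_nonneg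
    (Filter.Eventually.of_forall fun v => mul_nonneg (gaussWeight_nonneg d v) (hN0 v))
    ((integrable_gaussWeight hd').mul_bdd hN (c := C) (Filter.Eventually.of_forall fun v => ?_))
    (Filter.Eventually.of_forall fun v =>
      mul_le_mul_of_nonneg_right (gaussWeight_le_gaussWeight hd hdd' v) (hN0 v))
  rw [Real.norm_of_nonneg (hN0 v)]
  exact hNC v

end GaussWeight

lemma sum_sum_mul_cexp_sub_eq_normSq {ι : Type*} [Fintype ι] (a x : ι → ℝ) :
    ∑ i, ∑ j, (a i * a j : ℂ) * cexp (↑(x i - x j) * I) =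
      (normSq (∑ j, (a j : ℂ) * cexp (↑(x j) * I)) : ℂ) := by
  have hconj : ∀ j, conj (cexp (↑(x j) * I)) = cexp (-↑(x j) * I) := fun j => by
    rw [← Complex.exp_conj, map_mul, conj_ofReal, conj_I, mul_neg, neg_mul]
  rw [← mul_conj, map_sum, Finset.sum_mul_sum]
  refine Finset.sum_congr rfl fun i _ => Finset.sum_congr rfl fun j _ => ?_
  rw [map_mul, conj_ofReal, hconj, ofReal_sub, sub_mul, sub_eq_add_neg, Complex.exp_add, ← neg_mul]
  ring

lemma normSq_sum_mul_cexp_le {ι : Type*} [Fintype ι] (a x : ι → ℝ) :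
    normSq (∑ j, (a j : ℂ) * cexp (↑(x j) * I)) ≤ (∑ j, |a j|) ^ 2 := by
  rw [normSq_eq_norm_sq]
  gcongr
  refine (norm_sum_le _ _).trans_eq (Finset.sum_congr rfl fun j _ => ?_)
  rw [norm_mul, norm_exp_ofReal_mul_I, norm_real, Real.norm_eq_abs, mul_one]

lemma gaussMass_mul_quadForm_gaussGram {n m : ℕ} (w : Fin n → Fin m → ℝ) {d : Fin m → ℝ}
    (hd : ∀ k, 0 < d k) (a : Fin n → ℝ) :
    gaussMass d * (a ⬝ᵥ (gaussGram w d *ᵥ a)) =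
      ∫ v, gaussWeight d v * normSq (∑ j, (a j : ℂ) * cexp (↑(v ⬝ᵥ w j) * I)) := by
  apply ofReal_injective
  have hpoint : ∀ v,
      ((gaussWeight d v * normSq (∑ j, (a j : ℂ) * cexp (↑(v ⬝ᵥ w j) * I)) : ℝ) : ℂ) =
      ∑ i, ∑ j, (a i * a j : ℂ) * ((gaussWeight d v : ℂ) * cexp (↑(v ⬝ᵥ (w i - w j)) * I)) := by
    intro v
    rw [ofReal_mul, ← sum_sum_mul_cexp_sub_eq_normSq, Finset.mul_sum]
    simp_rw [Finset.mul_sum, dotProduct_sub]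
    exact Finset.sum_congr rfl fun i _ => Finset.sum_congr rfl fun j _ => by ring
  rw [← integral_complex_ofReal]
  simp_rw [hpoint]
  rw [integral_finsetSum _ fun i _ => integrable_finsetSum _ fun j _ =>
    (integrable_gaussWeight_mul_cexp hd _).const_mul _]
  simp_rw [integral_finsetSum _ fun j _ => (integrable_gaussWeight_mul_cexp hd _).const_mul _,
    integral_const_mul, integral_gaussWeight_mul_cexp hd]
  simp only [dotProduct, mulVec, gaussGram, of_apply, Pi.sub_apply]
  push_cast
  simp_rw [Finset.mul_sum]
  exact Finset.sum_congr rfl fun i _ => Finset.sum_congr rfl fun j _ => by ring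

section QuadForm

variable {n m : ℕ} (w : Fin n → Fin m → ℝ)

lemma quadForm_gaussGram_nonneg {d : Fin m → ℝ} (hd : ∀ k, 0 < d k) (a : Fin n → ℝ) :
    0 ≤ a ⬝ᵥ (gaussGram w d *ᵥ a) := by
  refine nonneg_of_mul_nonneg_right ?_ (gaussMass_pos hd)
  rw [gaussMass_mul_quadForm_gaussGram w hd]
  exact integral_nonneg fun v => mul_nonneg (gaussWeight_nonneg d v) (normSq_nonneg _)

lemma gaussMass_mul_quadForm_gaussGram_mono {d d' : Fin m → ℝ} (hd : ∀ k, 0 < d k)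
    (hdd' : ∀ k, d k ≤ d' k) (a : Fin n → ℝ) :
    gaussMass d * (a ⬝ᵥ (gaussGram w d *ᵥ a)) ≤ gaussMass d' * (a ⬝ᵥ (gaussGram w d' *ᵥ a)) := by
  rw [gaussMass_mul_quadForm_gaussGram w hd,
    gaussMass_mul_quadForm_gaussGram w fun k => (hd k).trans_le (hdd' k)]
  exact integral_gaussWeight_mul_mono hd hdd' (by fun_prop) (fun v => normSq_nonneg _)
    fun v => normSq_sum_mul_cexp_le a _

end QuadForm

/-- Comparison of Gaussian quadratic forms: if `0 < d_L ≤ dₖ ≤ d_U` for all `k`, then for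
every `a`,
`0 ≤ (d_L/d_U)^{m/2} aᵀΩ(d_L𝟙)a ≤ aᵀΩ(d)a ≤ (d_U/d_L)^{m/2} aᵀΩ(d_U𝟙)a`. -/
theorem gaussGram_quadform_comparison {n m : ℕ} (w : Fin n → Fin m → ℝ)
    (dL dU : ℝ) (hL : 0 < dL) (hLU : dL ≤ dU)
    (d : Fin m → ℝ) (hd : ∀ k, dL ≤ d k ∧ d k ≤ dU) (a : Fin n → ℝ) :
    0 ≤ (dL / dU) ^ ((m : ℝ) / 2) * (a ⬝ᵥ (gaussGram w (fun _ => dL) *ᵥ a)) ∧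
    (dL / dU) ^ ((m : ℝ) / 2) * (a ⬝ᵥ (gaussGram w (fun _ => dL) *ᵥ a)) ≤
      a ⬝ᵥ (gaussGram w d *ᵥ a) ∧
    a ⬝ᵥ (gaussGram w d *ᵥ a) ≤
      (dU / dL) ^ ((m : ℝ) / 2) * (a ⬝ᵥ (gaussGram w (fun _ => dU) *ᵥ a)) := by
  have hU : 0 < dU := hL.trans_le hLU
  have hdpos : ∀ k, 0 < d k := fun k => hL.trans_le (hd k).1
  have hLU_ratio := div_rpow_card_div_two (ι := Fin m) hL hU
  have hUL_ratio := div_rpow_card_div_two (ι := Fin m) hU hL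
  rw [Fintype.card_fin] at hLU_ratio hUL_ratio
  rw [hLU_ratio, hUL_ratio, div_mul_eq_mul_div, div_mul_eq_mul_div,
    div_le_iff₀ (gaussMass_pos fun _ => hU), le_div_iff₀ (gaussMass_pos fun _ => hL)]
  have hQ := quadForm_gaussGram_nonneg w hdpos a
  refine ⟨div_nonneg (mul_nonneg (gaussMass_pos fun _ => hL).le
    (quadForm_gaussGram_nonneg w (fun _ => hL) a)) (gaussMass_pos fun _ => hU).le, ?_, ?_⟩
  · calc _ ≤ gaussMass d * (a ⬝ᵥ (gaussGram w d *ᵥ a)) :=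
          gaussMass_mul_quadForm_gaussGram_mono w (fun _ => hL) (fun k => (hd k).1) a
      _ ≤ _ := by
          rw [mul_comm]
          gcongr
          exact gaussMass_le_gaussMass fun k => (hd k).2
  · calc _ ≤ (a ⬝ᵥ (gaussGram w d *ᵥ a)) * gaussMass d := by
          gcongr
          exact gaussMass_le_gaussMass fun k => (hd k).1
      _ ≤ _ := by
          rw [mul_comm]
          exact gaussMass_mul_quadForm_gaussGram_mono w hdpos (fun k => (hd k).2) a
end

section
/- Let Ω be a real symmetric positive definite n×n matrix, and let M be a real n×p matrix whose columns each sum to zero (𝟙ᵀM = 0, with 𝟙 the all-ones vector in ℝⁿ) and which has trivial kernel (Mu = 0 implies u = 0). Then the p×p matrix Mᵀ𝔻M is positive definite; in particular it is invertible. -/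
/-!
With `a = 𝟙ᵀΩ𝟙` and `Q = I - a⁻¹ 𝟙𝟙ᵀΩ`, a direct computation gives `𝔻 = QᵀΩQ`, so that
`Mᵀ𝔻M = (QM)ᵀΩ(QM)` is positive definite as soon as `QM` is injective. Now `Qy = y - c𝟙` for
some scalar `c`, so `QMu = 0` makes `Mu` a multiple of `𝟙`; but `Mu` is orthogonal to `𝟙`, hence
`Mu = 0` and `u = 0`.
-/

open Matrix

/-- The all-ones vector in `ℝⁿ`. -/
def onesVec (n : ℕ) : Fin n → ℝ := fun _ => 1

/-- The centering matrix `𝔻 = Ω - (𝟙ᵀΩ𝟙)⁻¹ Ω𝟙𝟙ᵀΩ`. -/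
noncomputable def centerMat {n : ℕ} (Ω : Matrix (Fin n) (Fin n) ℝ) :
    Matrix (Fin n) (Fin n) ℝ :=
  Ω - (onesVec n ⬝ᵥ (Ω *ᵥ onesVec n))⁻¹ •
    (Ω * Matrix.vecMulVec (onesVec n) (onesVec n) * Ω)

section

variable {ι : Type*} [Fintype ι]

theorem vecMulVec_self_mul_mul_vecMulVec_self (A : Matrix ι ι ℝ) (e : ι → ℝ) :
    vecMulVec e e * A * vecMulVec e e = (e ⬝ᵥ (A *ᵥ e)) • vecMulVec e e := by
  rw [Matrix.mul_assoc, mul_vecMulVec, vecMulVec_mul_vecMulVec, vecMulVec_smul]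

theorem eq_zero_of_dotProduct_eq_zero_of_eq_smul {e y : ι → ℝ} {c : ℝ} (hy : y = c • e)
    (he : e ⬝ᵥ y = 0) : y = 0 := by
  rw [hy, dotProduct_smul, smul_eq_mul, mul_eq_zero, dotProduct_self_eq_zero] at he
  rcases he with rfl | rfl <;> simp [hy]

variable [DecidableEq ι]

/-- The projection along `e` onto the `Ω`-orthogonal complement of `e`. -/
noncomputable def complProj (Ω : Matrix ι ι ℝ) (e : ι → ℝ) : Matrix ι ι ℝ :=
  1 - (e ⬝ᵥ (Ω *ᵥ e))⁻¹ • (vecMulVec e e * Ω)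

theorem complProj_mulVec (Ω : Matrix ι ι ℝ) (e y : ι → ℝ) :
    complProj Ω e *ᵥ y = y - ((e ⬝ᵥ (Ω *ᵥ e))⁻¹ * (e ⬝ᵥ (Ω *ᵥ y))) • e := by
  rw [complProj, sub_mulVec, one_mulVec, smul_mulVec, ← mulVec_mulVec, vecMulVec_mulVec,
    op_smul_eq_smul, smul_smul]

theorem transpose_complProj_mul_mul_complProj {Ω : Matrix ι ι ℝ} (hΩ : Ωᵀ = Ω) (e : ι → ℝ) :
    (complProj Ω e)ᵀ * Ω * complProj Ω e =
      Ω - (e ⬝ᵥ (Ω *ᵥ e))⁻¹ • (Ω * vecMulVec e e * Ω) := by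
  simp only [complProj, transpose_sub, transpose_one, transpose_smul, transpose_mul,
    transpose_vecMulVec, hΩ, sub_mul, mul_sub, smul_mul_assoc, mul_smul_comm, one_mul, mul_one,
    Matrix.mul_assoc]
  set a := e ⬝ᵥ (Ω *ᵥ e)
  have hEΩE : Ω * (vecMulVec e e * (Ω * (vecMulVec e e * Ω))) =
      a • (Ω * (vecMulVec e e * Ω)) :=
    calc _ = Ω * (vecMulVec e e * Ω * vecMulVec e e) * Ω := by simp only [Matrix.mul_assoc]
      _ = _ := by
        rw [vecMulVec_self_mul_mul_vecMulVec_self, mul_smul_comm, smul_mul_assoc,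
          Matrix.mul_assoc]
  -- also true for `a = 0`, since then `a⁻¹ = 0`
  have ha : a⁻¹ * a⁻¹ * a = a⁻¹ := by
    rcases eq_or_ne a 0 with h | h
    · simp [h]
    · field_simp
  rw [hEΩE]
  linear_combination (norm := module) ha • (Ω * (vecMulVec e e * Ω))

theorem injective_mulVec_complProj_mul {κ : Type*} [Fintype κ] (Ω : Matrix ι ι ℝ)
    {e : ι → ℝ} {M : Matrix ι κ ℝ} (he : e ᵥ* M = 0) (hM : Function.Injective M.mulVec) :
    Function.Injective (complProj Ω e * M).mulVec := by
  refine (injective_iff_map_eq_zero (complProj Ω e * M).mulVecLin).2 fun u hu => ?_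
  rw [mulVecLin_apply, ← mulVec_mulVec, complProj_mulVec, sub_eq_zero] at hu
  have hMu : M *ᵥ u = 0 := eq_zero_of_dotProduct_eq_zero_of_eq_smul hu
    (by rw [dotProduct_mulVec, he, zero_dotProduct])
  exact hM (hMu.trans (mulVec_zero M).symm)

end

/-- If `Ω` is real symmetric positive definite and `M` is an `n × p` matrix whose columns
each sum to zero and whose kernel is trivial, then `Mᵀ𝔻M` is positive definite, in
particular invertible. -/
theorem transpose_centerMat_mul_posDef {n p : ℕ}
    {Ω : Matrix (Fin n) (Fin n) ℝ} (hΩ : Ω.PosDef)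
    (M : Matrix (Fin n) (Fin p) ℝ)
    (hcol : onesVec n ᵥ* M = 0)
    (hker : ∀ u : Fin p → ℝ, M *ᵥ u = 0 → u = 0) :
    (Mᵀ * centerMat Ω * M).PosDef ∧ IsUnit (Mᵀ * centerMat Ω * M) := by
  set Q := complProj Ω (onesVec n)
  have hsymm : Ωᵀ = Ω := by simpa using hΩ.isHermitian.eq
  have hfactor : Mᵀ * centerMat Ω * M = (Q * M)ᴴ * Ω * (Q * M) := by
    rw [conjTranspose_eq_transpose_of_trivial, transpose_mul, centerMat,
      ← transpose_complProj_mul_mul_complProj hsymm]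
    simp only [Q, Matrix.mul_assoc]
  have hinj : Function.Injective (Q * M).mulVec :=
    injective_mulVec_complProj_mul Ω hcol ((injective_iff_map_eq_zero M.mulVecLin).2 hker)
  have hPD : (Mᵀ * centerMat Ω * M).PosDef := hfactor ▸ hΩ.conjTranspose_mul_mul_same hinj
  exact ⟨hPD, hPD.isUnit⟩
end

section
/- Let Ω be a real symmetric positive definite n×n matrix, X a real n×p matrix, and y ∈ ℝⁿ; set 𝔻 = Ω − (𝟙ᵀΩ𝟙)⁻¹ Ω 𝟙 𝟙ᵀ Ω and assume Xᵀ𝔻X is invertible. Define β̂ = (Xᵀ𝔻X)⁻¹ Xᵀ𝔻 y and γ̂ = (𝟙ᵀΩ𝟙)⁻¹ 𝟙ᵀΩ (y − Xβ̂). Then (γ̂, β̂) minimizes the generalized least-squares objective: for all γ ∈ ℝ and β ∈ ℝ^p, (y − γ̂·𝟙 − Xβ̂)ᵀ Ω (y − γ̂·𝟙 − Xβ̂) ≤ (y − γ·𝟙 − Xβ)ᵀ Ω (y − γ·𝟙 − Xβ); moreover the minimal value equals yᵀ B̂ y, where B̂ = 𝔻 − 𝔻 X (Xᵀ𝔻X)⁻¹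 Xᵀ 𝔻. -/
/-!
Completing the square in the intercept gives, with `s = 𝟙ᵀΩ𝟙 > 0`,
`(y - γ𝟙 - Xβ)ᵀΩ(y - γ𝟙 - Xβ) = s (γ - s⁻¹𝟙ᵀΩ(y - Xβ))² + (y - Xβ)ᵀ𝔻(y - Xβ)`,
so `γ̂` kills the first term and what remains is weighted least squares in `β` with the positive
semidefinite weight `𝔻`. The normal equations `Xᵀ𝔻(y - Xβ̂) = 0` make the residual `r̂ = y - Xβ̂`
`𝔻`-orthogonal to the columns of `X`, hence `(y - Xβ)ᵀ𝔻(y - Xβ) = r̂ᵀ𝔻r̂ + (X(β - β̂))ᵀ𝔻X(β - β̂)`,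
and `r̂ᵀ𝔻r̂ = yᵀ𝔻r̂ = yᵀB̂y`.
-/

open Matrix

/-- The generalized least-squares slope `β̂ = (Xᵀ𝔻X)⁻¹Xᵀ𝔻y`. -/
noncomputable def betaGLS {n p : ℕ} (Ω : Matrix (Fin n) (Fin n) ℝ)
    (X : Matrix (Fin n) (Fin p) ℝ) (y : Fin n → ℝ) : Fin p → ℝ :=
  (Xᵀ * centerMat Ω * X)⁻¹ *ᵥ ((Xᵀ * centerMat Ω) *ᵥ y)

/-- The generalized least-squares intercept `γ̂ = (𝟙ᵀΩ𝟙)⁻¹𝟙ᵀΩ(y - Xβ̂)`. -/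
noncomputable def gammaGLS {n p : ℕ} (Ω : Matrix (Fin n) (Fin n) ℝ)
    (X : Matrix (Fin n) (Fin p) ℝ) (y : Fin n → ℝ) : ℝ :=
  (onesVec n ⬝ᵥ (Ω *ᵥ onesVec n))⁻¹ *
    (onesVec n ⬝ᵥ (Ω *ᵥ (y - X *ᵥ betaGLS Ω X y)))

section QuadraticForm

variable {ι : Type*} [Fintype ι]

theorem Matrix.IsSymm.dotProduct_mulVec_comm {R : Type*} [CommSemiring R] {A : Matrix ι ι R}
    (hA : A.IsSymm) (u v : ι → R) : u ⬝ᵥ (A *ᵥ v) = v ⬝ᵥ (A *ᵥ u) := by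
  rw [dotProduct_mulVec, ← vecMul_transpose, hA.eq, dotProduct_comm]

theorem Matrix.IsSymm.sub_dotProduct_mulVec_sub_of_orthogonal {R : Type*} [CommRing R]
    {A : Matrix ι ι R} (hA : A.IsSymm) {r v : ι → R} (h : v ⬝ᵥ (A *ᵥ r) = 0) :
    (r - v) ⬝ᵥ (A *ᵥ (r - v)) = r ⬝ᵥ (A *ᵥ r) + v ⬝ᵥ (A *ᵥ v) := by
  have h' : r ⬝ᵥ (A *ᵥ v) = 0 := by rw [hA.dotProduct_mulVec_comm, h]
  simp only [mulVec_sub, dotProduct_sub, sub_dotProduct, h, h']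
  ring

theorem Matrix.IsSymm.sub_smul_dotProduct_mulVec_sub_smul {K : Type*} [Field K]
    {A : Matrix ι ι K} (hA : A.IsSymm) {u : ι → K} (hu : u ⬝ᵥ (A *ᵥ u) ≠ 0) (r : ι → K) (γ : K) :
    (r - γ • u) ⬝ᵥ (A *ᵥ (r - γ • u)) =
      u ⬝ᵥ (A *ᵥ u) * (γ - (u ⬝ᵥ (A *ᵥ u))⁻¹ * (u ⬝ᵥ (A *ᵥ r))) ^ 2 +
        (r ⬝ᵥ (A *ᵥ r) - (u ⬝ᵥ (A *ᵥ u))⁻¹ * (u ⬝ᵥ (A *ᵥ r)) ^ 2) := by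
  have hru : r ⬝ᵥ (A *ᵥ u) = u ⬝ᵥ (A *ᵥ r) := hA.dotProduct_mulVec_comm r u
  simp only [mulVec_sub, mulVec_smul, dotProduct_sub, sub_dotProduct, dotProduct_smul,
    smul_dotProduct, smul_eq_mul, hru]
  field_simp
  ring

end QuadraticForm

section WeightedLeastSquares

variable {ι κ : Type*} [Fintype ι] [Fintype κ] [DecidableEq κ]

noncomputable def wlsCoef (D : Matrix ι ι ℝ) (X : Matrix ι κ ℝ) (y : ι → ℝ) : κ → ℝ :=
  (Xᵀ * D * X)⁻¹ *ᵥ ((Xᵀ * D) *ᵥ y)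

variable {D : Matrix ι ι ℝ} {X : Matrix ι κ ℝ}

theorem transpose_mulVec_mulVec_sub_wlsCoef_eq_zero (hX : IsUnit (Xᵀ * D * X)) (y : ι → ℝ) :
    Xᵀ *ᵥ (D *ᵥ (y - X *ᵥ wlsCoef D X y)) = 0 := by
  have hM : Xᵀ * D * X * (Xᵀ * D * X)⁻¹ = 1 :=
    mul_nonsing_inv _ ((isUnit_iff_isUnit_det _).mp hX)
  rw [wlsCoef, mulVec_sub, mulVec_sub, mulVec_mulVec, mulVec_mulVec, mulVec_mulVec,
    mulVec_mulVec, hM, one_mulVec, sub_self]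

theorem mulVec_dotProduct_mulVec_sub_wlsCoef_eq_zero (hX : IsUnit (Xᵀ * D * X)) (y : ι → ℝ)
    (β : κ → ℝ) :
    (X *ᵥ β) ⬝ᵥ (D *ᵥ (y - X *ᵥ wlsCoef D X y)) = 0 := by
  rw [dotProduct_comm, dotProduct_mulVec, ← mulVec_transpose,
    transpose_mulVec_mulVec_sub_wlsCoef_eq_zero hX, zero_dotProduct]

theorem sub_mulVec_dotProduct_mulVec_eq_wlsCoef_add (hD : D.IsSymm) (hX : IsUnit (Xᵀ * D * X))
    (y : ι → ℝ) (β : κ → ℝ) :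
    (y - X *ᵥ β) ⬝ᵥ (D *ᵥ (y - X *ᵥ β)) =
      (y - X *ᵥ wlsCoef D X y) ⬝ᵥ (D *ᵥ (y - X *ᵥ wlsCoef D X y)) +
        (X *ᵥ (β - wlsCoef D X y)) ⬝ᵥ (D *ᵥ (X *ᵥ (β - wlsCoef D X y))) := by
  have hres : y - X *ᵥ β = (y - X *ᵥ wlsCoef D X y) - X *ᵥ (β - wlsCoef D X y) := by
    rw [mulVec_sub]; abel
  rw [hres, hD.sub_dotProduct_mulVec_sub_of_orthogonal
    (mulVec_dotProduct_mulVec_sub_wlsCoef_eq_zero hX y _)]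

theorem sub_wlsCoef_dotProduct_mulVec_eq (hX : IsUnit (Xᵀ * D * X)) (y : ι → ℝ) :
    (y - X *ᵥ wlsCoef D X y) ⬝ᵥ (D *ᵥ (y - X *ᵥ wlsCoef D X y)) =
      y ⬝ᵥ ((D - D * X * (Xᵀ * D * X)⁻¹ * Xᵀ * D) *ᵥ y) := by
  rw [sub_dotProduct, mulVec_dotProduct_mulVec_sub_wlsCoef_eq_zero hX, sub_zero, wlsCoef,
    mulVec_sub, sub_mulVec]
  simp only [mulVec_mulVec, Matrix.mul_assoc]

end WeightedLeastSquares

section Centering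

variable {n : ℕ} {Ω : Matrix (Fin n) (Fin n) ℝ}

theorem centerMat_isSymm (hΩ : Ω.IsSymm) : (centerMat Ω).IsSymm := by
  refine hΩ.sub (IsSymm.smul ?_ _)
  rw [IsSymm, transpose_mul, transpose_mul, transpose_vecMulVec, hΩ.eq, Matrix.mul_assoc]

theorem dotProduct_centerMat_mulVec (hΩ : Ω.IsSymm) (r : Fin n → ℝ) :
    r ⬝ᵥ (centerMat Ω *ᵥ r) =
      r ⬝ᵥ (Ω *ᵥ r) - (onesVec n ⬝ᵥ (Ω *ᵥ onesVec n))⁻¹ * (onesVec n ⬝ᵥ (Ω *ᵥ r)) ^ 2 := by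
  simp only [centerMat, sub_mulVec, smul_mulVec, ← mulVec_mulVec, vecMulVec_mulVec,
    op_smul_eq_smul, mulVec_smul, dotProduct_sub, dotProduct_smul, smul_eq_mul,
    hΩ.dotProduct_mulVec_comm r (onesVec n)]
  ring

theorem sub_smul_onesVec_dotProduct_mulVec (hΩ : Ω.IsSymm)
    (hs : onesVec n ⬝ᵥ (Ω *ᵥ onesVec n) ≠ 0) (r : Fin n → ℝ) (γ : ℝ) :
    (r - γ • onesVec n) ⬝ᵥ (Ω *ᵥ (r - γ • onesVec n)) =
      onesVec n ⬝ᵥ (Ω *ᵥ onesVec n) *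
          (γ - (onesVec n ⬝ᵥ (Ω *ᵥ onesVec n))⁻¹ * (onesVec n ⬝ᵥ (Ω *ᵥ r))) ^ 2 +
        r ⬝ᵥ (centerMat Ω *ᵥ r) := by
  rw [hΩ.sub_smul_dotProduct_mulVec_sub_smul hs, dotProduct_centerMat_mulVec hΩ]

theorem Matrix.PosDef.onesVec_dotProduct_mulVec_pos [NeZero n] (hΩ : Ω.PosDef) :
    0 < onesVec n ⬝ᵥ (Ω *ᵥ onesVec n) := by
  simpa using hΩ.dotProduct_mulVec_pos (x := onesVec n) fun h => by
    simpa [onesVec] using congrFun h 0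

theorem Matrix.PosDef.posSemidef_centerMat [NeZero n] (hΩ : Ω.PosDef) :
    (centerMat Ω).PosSemidef := by
  have hΩs : Ω.IsSymm := isHermitian_iff_isSymm.mp hΩ.isHermitian
  refine .of_dotProduct_mulVec_nonneg (isHermitian_iff_isSymm.mpr (centerMat_isSymm hΩs))
    fun r => ?_
  -- the quadratic form of `𝔻` is the minimum over `γ` of that of `Ω` at `r - γ𝟙`
  set γ₀ := (onesVec n ⬝ᵥ (Ω *ᵥ onesVec n))⁻¹ * (onesVec n ⬝ᵥ (Ω *ᵥ r))
  have hmin := sub_smul_onesVec_dotProduct_mulVec hΩs hΩ.onesVec_dotProduct_mulVec_pos.ne' r γ₀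
  rw [sub_self, zero_pow two_ne_zero, mul_zero, zero_add] at hmin
  rw [star_trivial, ← hmin]
  simpa using hΩ.posSemidef.dotProduct_mulVec_nonneg (r - γ₀ • onesVec n)

end Centering

section GeneralizedLeastSquares

variable {n p : ℕ} {Ω : Matrix (Fin n) (Fin n) ℝ} {X : Matrix (Fin n) (Fin p) ℝ}

def glsObjective (Ω : Matrix (Fin n) (Fin n) ℝ) (X : Matrix (Fin n) (Fin p) ℝ) (y : Fin n → ℝ)
    (γ : ℝ) (β : Fin p → ℝ) : ℝ :=
  (y - γ • onesVec n - X *ᵥ β) ⬝ᵥ (Ω *ᵥ (y - γ • onesVec n - X *ᵥ β))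

theorem betaGLS_eq_wlsCoef (y : Fin n → ℝ) : betaGLS Ω X y = wlsCoef (centerMat Ω) X y := rfl

theorem glsObjective_eq (hΩ : Ω.IsSymm) (hs : onesVec n ⬝ᵥ (Ω *ᵥ onesVec n) ≠ 0)
    (hX : IsUnit (Xᵀ * centerMat Ω * X)) (y : Fin n → ℝ) (γ : ℝ) (β : Fin p → ℝ) :
    glsObjective Ω X y γ β =
      onesVec n ⬝ᵥ (Ω *ᵥ onesVec n) *
          (γ - (onesVec n ⬝ᵥ (Ω *ᵥ onesVec n))⁻¹ * (onesVec n ⬝ᵥ (Ω *ᵥ (y - X *ᵥ β)))) ^ 2 +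
        ((y - X *ᵥ betaGLS Ω X y) ⬝ᵥ (centerMat Ω *ᵥ (y - X *ᵥ betaGLS Ω X y)) +
          (X *ᵥ (β - betaGLS Ω X y)) ⬝ᵥ (centerMat Ω *ᵥ (X *ᵥ (β - betaGLS Ω X y)))) := by
  rw [glsObjective, sub_right_comm, sub_smul_onesVec_dotProduct_mulVec hΩ hs,
    betaGLS_eq_wlsCoef, sub_mulVec_dotProduct_mulVec_eq_wlsCoef_add (centerMat_isSymm hΩ) hX]

end GeneralizedLeastSquares

/-- The pair `(γ̂, β̂)` minimizes the generalized least-squares objective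
`(y - γ𝟙 - Xβ)ᵀΩ(y - γ𝟙 - Xβ)`, and the minimal value equals `yᵀB̂y` with
`B̂ = 𝔻 - 𝔻X(Xᵀ𝔻X)⁻¹Xᵀ𝔻`. -/
theorem gls_minimizer {n p : ℕ} {Ω : Matrix (Fin n) (Fin n) ℝ} (hΩ : Ω.PosDef)
    (X : Matrix (Fin n) (Fin p) ℝ) (y : Fin n → ℝ)
    (hX : IsUnit (Xᵀ * centerMat Ω * X)) :
    (∀ (γ : ℝ) (β : Fin p → ℝ),
      (y - gammaGLS Ω X y • onesVec n - X *ᵥ betaGLS Ω X y) ⬝ᵥ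
          (Ω *ᵥ (y - gammaGLS Ω X y • onesVec n - X *ᵥ betaGLS Ω X y)) ≤
        (y - γ • onesVec n - X *ᵥ β) ⬝ᵥ (Ω *ᵥ (y - γ • onesVec n - X *ᵥ β))) ∧
    (y - gammaGLS Ω X y • onesVec n - X *ᵥ betaGLS Ω X y) ⬝ᵥ
        (Ω *ᵥ (y - gammaGLS Ω X y • onesVec n - X *ᵥ betaGLS Ω X y)) =
      y ⬝ᵥ ((centerMat Ω -
          centerMat Ω * X * (Xᵀ * centerMat Ω * X)⁻¹ * Xᵀ * centerMat Ω) *ᵥ y) := by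
  obtain rfl | hn := n.eq_zero_or_pos
  · simp [dotProduct]
  have : NeZero n := ⟨hn.ne'⟩
  have hΩs : Ω.IsSymm := isHermitian_iff_isSymm.mp hΩ.isHermitian
  have hs := hΩ.onesVec_dotProduct_mulVec_pos
  have hmin : glsObjective Ω X y (gammaGLS Ω X y) (betaGLS Ω X y) =
      (y - X *ᵥ betaGLS Ω X y) ⬝ᵥ (centerMat Ω *ᵥ (y - X *ᵥ betaGLS Ω X y)) := by
    rw [glsObjective_eq hΩs hs.ne' hX]
    simp [gammaGLS]
  change (∀ γ β, glsObjective Ω X y _ _ ≤ glsObjective Ω X y γ β) ∧ glsObjective Ω X y _ _ = _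
  refine ⟨fun γ β => ?_, ?_⟩
  · have hD := hΩ.posSemidef_centerMat.dotProduct_mulVec_nonneg (X *ᵥ (β - betaGLS Ω X y))
    rw [star_trivial] at hD
    rw [hmin, glsObjective_eq hΩs hs.ne' hX]
    exact le_add_of_nonneg_of_le (mul_nonneg hs.le (sq_nonneg _)) (le_add_of_nonneg_right hD)
  · rw [hmin, betaGLS_eq_wlsCoef, sub_wlsCoef_dotProduct_mulVec_eq hX]
end

section
/- Let D be a real symmetric positive semidefinite n×n matrix, X a real n×p matrix such that XᵀDX is positive definite, R a real r×p matrix of full row rank, and c ∈ ℝ^r, y ∈ ℝⁿ. With β̂ = (XᵀDX)⁻¹XᵀDy and β_R = β̂ − (XᵀDX)⁻¹ Rᵀ ( R (XᵀDX)⁻¹ Rᵀ )⁻¹ (Rβ̂ − c), the following identity holds: (y − Xβ_R)ᵀ D (y − Xβ_R) = yᵀ ( D − D X (XᵀDX)⁻¹ Xᵀ D ) y + (Rβ̂ − c)ᵀ ( R (XᵀDX)⁻¹ Rᵀ )⁻¹ (Rβ̂ − c). -/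
open Matrix

/-- The (unrestricted) weighted least-squares estimator `β̂ = (XᵀDX)⁻¹XᵀDy`. -/
noncomputable def betaHat {n p : ℕ} (D : Matrix (Fin n) (Fin n) ℝ)
    (X : Matrix (Fin n) (Fin p) ℝ) (y : Fin n → ℝ) : Fin p → ℝ :=
  (Xᵀ * D * X)⁻¹ *ᵥ ((Xᵀ * D) *ᵥ y)

/-- The restricted estimator
`β_R = β̂ - (XᵀDX)⁻¹Rᵀ(R(XᵀDX)⁻¹Rᵀ)⁻¹(Rβ̂ - c)`. -/
noncomputable def betaRestricted {n p r : ℕ} (D : Matrix (Fin n) (Fin n) ℝ)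
    (X : Matrix (Fin n) (Fin p) ℝ) (R : Matrix (Fin r) (Fin p) ℝ)
    (c : Fin r → ℝ) (y : Fin n → ℝ) : Fin p → ℝ :=
  betaHat D X y -
    ((Xᵀ * D * X)⁻¹ * Rᵀ * (R * (Xᵀ * D * X)⁻¹ * Rᵀ)⁻¹) *ᵥ
      (R *ᵥ betaHat D X y - c)

/-!
The estimator `β̂` makes the residual `y - Xβ̂` orthogonal, for the form `D`, to the column space
of `X`. Since `y - Xβ_R = (y - Xβ̂) + Xv` with `v = A⁻¹RᵀS⁻¹(Rβ̂ - c)`, `A = XᵀDX`, `S = RA⁻¹Rᵀ`,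
the `D`-form of `y - Xβ_R` splits into that of the residual, which is `yᵀ(D - DXA⁻¹XᵀD)y`, and
that of `Xv`, which is `(Rβ̂ - c)ᵀS⁻¹(RA⁻¹AA⁻¹Rᵀ)S⁻¹(Rβ̂ - c) = (Rβ̂ - c)ᵀS⁻¹(Rβ̂ - c)`.
-/

namespace Matrix

variable {K : Type*} [CommRing K] {m k l : Type*} [Fintype m] [Fintype k] [Fintype l]

theorem nonsing_inv_mul_mul_nonsing_inv [DecidableEq k] (A : Matrix k k K) :
    A⁻¹ * A * A⁻¹ = A⁻¹ := by
  by_cases h : IsUnit A.det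
  · rw [nonsing_inv_mul _ h, Matrix.one_mul]
  · rw [nonsing_inv_apply_not_isUnit _ h, Matrix.zero_mul, Matrix.zero_mul]

theorem mulVec_dotProduct_eq_dotProduct_transpose_mulVec (X : Matrix m k K) (v : k → K)
    (w : m → K) : (X *ᵥ v) ⬝ᵥ w = v ⬝ᵥ (Xᵀ *ᵥ w) := by
  rw [dotProduct_transpose_mulVec, dotProduct_comm]

theorem dotProduct_mulVec_add_of_isSymm {D : Matrix m m K} (hD : D.IsSymm) {e w : m → K}
    (h : w ⬝ᵥ (D *ᵥ e) = 0) :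
    (e + w) ⬝ᵥ (D *ᵥ (e + w)) = e ⬝ᵥ (D *ᵥ e) + w ⬝ᵥ (D *ᵥ w) := by
  have h' : e ⬝ᵥ (D *ᵥ w) = 0 := by rw [← hD.eq, dotProduct_transpose_mulVec, h]
  simp only [mulVec_add, dotProduct_add, add_dotProduct, h, h']
  ring

theorem transpose_mul_sub_mul_nonsing_inv_mul_eq_zero [DecidableEq k] (D : Matrix m m K)
    (X : Matrix m k K) (hA : IsUnit (Xᵀ * D * X).det) :
    Xᵀ * (D - D * X * (Xᵀ * D * X)⁻¹ * Xᵀ * D) = 0 := by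
  have hassoc : Xᵀ * (D * X * (Xᵀ * D * X)⁻¹ * Xᵀ * D) =
      (Xᵀ * D * X) * (Xᵀ * D * X)⁻¹ * (Xᵀ * D) := by
    simp only [Matrix.mul_assoc]
  rw [Matrix.mul_sub, hassoc, mul_nonsing_inv _ hA, Matrix.one_mul, sub_self]

/-- No invertibility is needed: `M⁻¹ * M * M⁻¹ = M⁻¹` holds for the inverse of every matrix,
since a singular matrix has inverse `0`. -/
theorem transpose_mul_mul_eq_nonsing_inv [DecidableEq k] [DecidableEq l] {A : Matrix k k K}
    (hA : A.IsSymm) (R : Matrix l k K) :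
    (A⁻¹ * Rᵀ * (R * A⁻¹ * Rᵀ)⁻¹)ᵀ * A * (A⁻¹ * Rᵀ * (R * A⁻¹ * Rᵀ)⁻¹) = (R * A⁻¹ * Rᵀ)⁻¹ := by
  set S := R * A⁻¹ * Rᵀ
  have hS : S.IsSymm := by
    simp only [S, IsSymm, transpose_mul, transpose_transpose, hA.inv.eq, Matrix.mul_assoc]
  calc (A⁻¹ * Rᵀ * S⁻¹)ᵀ * A * (A⁻¹ * Rᵀ * S⁻¹)
      = S⁻¹ * (R * (A⁻¹ * A * A⁻¹) * Rᵀ) * S⁻¹ := by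
        simp only [transpose_mul, transpose_transpose, hA.inv.eq, hS.inv.eq, Matrix.mul_assoc]
    _ = S⁻¹ * S * S⁻¹ := by rw [nonsing_inv_mul_mul_nonsing_inv]
    _ = S⁻¹ := nonsing_inv_mul_mul_nonsing_inv S

end Matrix

section LeastSquares

variable {n p r : ℕ} {D : Matrix (Fin n) (Fin n) ℝ} {X : Matrix (Fin n) (Fin p) ℝ}

theorem mulVec_sub_mulVec_betaHat (y : Fin n → ℝ) :
    D *ᵥ (y - X *ᵥ betaHat D X y) = (D - D * X * (Xᵀ * D * X)⁻¹ * Xᵀ * D) *ᵥ y := by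
  simp only [betaHat, mulVec_sub, sub_mulVec, mulVec_mulVec, Matrix.mul_assoc]

theorem mulVec_dotProduct_mulVec_sub_mulVec_betaHat_eq_zero (hA : IsUnit (Xᵀ * D * X).det)
    (v : Fin p → ℝ) (y : Fin n → ℝ) : (X *ᵥ v) ⬝ᵥ (D *ᵥ (y - X *ᵥ betaHat D X y)) = 0 := by
  rw [mulVec_sub_mulVec_betaHat, mulVec_dotProduct_eq_dotProduct_transpose_mulVec, mulVec_mulVec,
    transpose_mul_sub_mul_nonsing_inv_mul_eq_zero D X hA, zero_mulVec, dotProduct_zero]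

theorem sub_mulVec_betaHat_dotProduct_mulVec_self (hA : IsUnit (Xᵀ * D * X).det)
    (y : Fin n → ℝ) :
    (y - X *ᵥ betaHat D X y) ⬝ᵥ (D *ᵥ (y - X *ᵥ betaHat D X y)) =
      y ⬝ᵥ ((D - D * X * (Xᵀ * D * X)⁻¹ * Xᵀ * D) *ᵥ y) := by
  rw [sub_dotProduct, mulVec_dotProduct_mulVec_sub_mulVec_betaHat_eq_zero hA, sub_zero,
    mulVec_sub_mulVec_betaHat]

theorem sub_mulVec_betaRestricted (R : Matrix (Fin r) (Fin p) ℝ) (c : Fin r → ℝ)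
    (y : Fin n → ℝ) :
    y - X *ᵥ betaRestricted D X R c y = (y - X *ᵥ betaHat D X y) +
      X *ᵥ (((Xᵀ * D * X)⁻¹ * Rᵀ * (R * (Xᵀ * D * X)⁻¹ * Rᵀ)⁻¹) *ᵥ
        (R *ᵥ betaHat D X y - c)) := by
  rw [betaRestricted, mulVec_sub]
  abel

end LeastSquares

theorem restricted_ls_decomposition_general {n p r : ℕ}
    {D : Matrix (Fin n) (Fin n) ℝ} (hD : D.PosSemidef)
    (X : Matrix (Fin n) (Fin p) ℝ) (hX : (Xᵀ * D * X).PosDef)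
    (R : Matrix (Fin r) (Fin p) ℝ)
    (c : Fin r → ℝ) (y : Fin n → ℝ) :
    (y - X *ᵥ betaRestricted D X R c y) ⬝ᵥ (D *ᵥ (y - X *ᵥ betaRestricted D X R c y)) =
      y ⬝ᵥ ((D - D * X * (Xᵀ * D * X)⁻¹ * Xᵀ * D) *ᵥ y) +
      (R *ᵥ betaHat D X y - c) ⬝ᵥ
        ((R * (Xᵀ * D * X)⁻¹ * Rᵀ)⁻¹ *ᵥ (R *ᵥ betaHat D X y - c)) := by
  have hDsymm : D.IsSymm := isHermitian_iff_isSymm.mp hD.isHermitian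
  have hAsymm : (Xᵀ * D * X).IsSymm := isHermitian_iff_isSymm.mp hX.isHermitian
  have hA : IsUnit (Xᵀ * D * X).det := (isUnit_iff_isUnit_det _).mp hX.isUnit
  set d := R *ᵥ betaHat D X y - c
  set T := (Xᵀ * D * X)⁻¹ * Rᵀ * (R * (Xᵀ * D * X)⁻¹ * Rᵀ)⁻¹
  have hcorrection : (X *ᵥ (T *ᵥ d)) ⬝ᵥ (D *ᵥ (X *ᵥ (T *ᵥ d))) =
      d ⬝ᵥ ((R * (Xᵀ * D * X)⁻¹ * Rᵀ)⁻¹ *ᵥ d) := by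
    have hTAT : Tᵀ * Xᵀ * D * X * T = Tᵀ * (Xᵀ * D * X) * T := by simp only [Matrix.mul_assoc]
    rw [mulVec_dotProduct_eq_dotProduct_transpose_mulVec,
      mulVec_dotProduct_eq_dotProduct_transpose_mulVec, mulVec_mulVec, mulVec_mulVec,
      mulVec_mulVec, mulVec_mulVec, hTAT, transpose_mul_mul_eq_nonsing_inv hAsymm]
  rw [sub_mulVec_betaRestricted,
    dotProduct_mulVec_add_of_isSymm hDsymm
      (mulVec_dotProduct_mulVec_sub_mulVec_betaHat_eq_zero hA _ y),
    sub_mulVec_betaHat_dotProduct_mulVec_self hA, hcorrection]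

/-- Decomposition of the restricted residual sum of squares:
`(y - Xβ_R)ᵀD(y - Xβ_R) = yᵀ(D - DX(XᵀDX)⁻¹XᵀD)y + (Rβ̂ - c)ᵀ(R(XᵀDX)⁻¹Rᵀ)⁻¹(Rβ̂ - c)`. -/
theorem restricted_ls_decomposition {n p r : ℕ}
    {D : Matrix (Fin n) (Fin n) ℝ} (hD : D.PosSemidef)
    (X : Matrix (Fin n) (Fin p) ℝ) (hX : (Xᵀ * D * X).PosDef)
    (R : Matrix (Fin r) (Fin p) ℝ) (hR : ∀ u : Fin r → ℝ, u ᵥ* R = 0 → u = 0)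
    (c : Fin r → ℝ) (y : Fin n → ℝ) :
    (y - X *ᵥ betaRestricted D X R c y) ⬝ᵥ (D *ᵥ (y - X *ᵥ betaRestricted D X R c y)) =
      y ⬝ᵥ ((D - D * X * (Xᵀ * D * X)⁻¹ * Xᵀ * D) *ᵥ y) +
      (R *ᵥ betaHat D X y - c) ⬝ᵥ
        ((R * (Xᵀ * D * X)⁻¹ * Rᵀ)⁻¹ *ᵥ (R *ᵥ betaHat D X y - c)) :=
  restricted_ls_decomposition_general hD X hX R c y
end

section
/- Let (Ω, 𝓕, P) be a probability space and let X : Ω → ℝ^p and Z : Ω → ℝ^q be random vectors all of whose coordinates are square-integrable. Assume (i) the law of Z is absolutely continuous with respect to Lebesgue measure on ℝ^q, and (ii) for every nonzero u ∈ ℝ^p, Var(⟨u, X − E[X | σ(Z)]⟩) > 0, where E[X | σ(Z)] denotes the coordinatewise conditional expectation of X given the σ-algebra generated by Z. Then for every (u, v) ∈ ℝ^p × ℝ^q with (u, v) ≠ 0, Var(⟨u, X⟩ + ⟨v, Z⟩) > 0; that is, the covariance matrix of the stacked vector (Xᵀ, Zᵀ)ᵀ is positive definite. -/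
open MeasureTheory ProbabilityTheory

/-!
If `⟨u, X⟩ + ⟨v, Z⟩` had variance zero it would be almost surely a constant `c`.
For `u = 0` this puts `Z` almost surely on the affine hyperplane `⟨v, z⟩ = c`, which is
Lebesgue-null, contradicting absolute continuity of the law of `Z`. For `u ≠ 0` it makes
`⟨u, X⟩ = c - ⟨v, Z⟩` almost surely `σ(Z)`-measurable, so `⟨u, X⟩` equals its own conditional
expectation and the residual `⟨u, X - E[X | σ(Z)]⟩` vanishes almost surely, contradicting (ii).
-/

theorem MeasureTheory.Measure.addHaar_preimage_singleton_of_ne_zero {E : Type*}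
    [NormedAddCommGroup E] [NormedSpace ℝ E] [MeasurableSpace E] [BorelSpace E]
    [FiniteDimensional ℝ E] (μ : Measure E) [μ.IsAddHaarMeasure] {f : E →ₗ[ℝ] ℝ} (hf : f ≠ 0)
    (c : ℝ) : μ (f ⁻¹' {c}) = 0 := by
  obtain ⟨x, rfl⟩ := LinearMap.surjective_of_ne_zero hf c
  have hker : f ⁻¹' {f x} = (· + -x) ⁻¹' (LinearMap.ker f : Set E) := by
    ext y
    simp [sub_eq_zero, ← sub_eq_add_neg]
  rw [hker, measure_preimage_add_right]
  exact Measure.addHaar_submodule μ _ (mt LinearMap.ker_eq_top.mp hf)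

section

variable {Ω ι : Type*} [Fintype ι] {m m₀ : MeasurableSpace Ω} {μ : Measure Ω}

theorem ae_dotProduct_ne_of_absolutelyContinuous {Z : Ω → ι → ℝ} (hZ : AEMeasurable Z μ)
    (hac : (μ.map Z).AbsolutelyContinuous (volume : Measure (ι → ℝ))) {v : ι → ℝ} (hv : v ≠ 0)
    (c : ℝ) : ∀ᵐ ω ∂μ, ∑ j, v j * Z ω j ≠ c := by
  classical
  have hv' : (dotProductEquiv ℝ ι v : (ι → ℝ) →ₗ[ℝ] ℝ) ≠ 0 := by
    simpa using hv
  have hnull : ∀ᵐ z ∂(volume : Measure (ι → ℝ)), v ⬝ᵥ z ≠ c := by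
    rw [ae_iff]
    simp only [not_not]
    exact Measure.addHaar_preimage_singleton_of_ne_zero volume hv' c
  exact ae_of_ae_map hZ (hac.ae_le hnull)

theorem memLp_sum_mul {X : Ω → ι → ℝ} {p : ENNReal} (hX : ∀ i, MemLp (fun ω => X ω i) p μ)
    (u : ι → ℝ) : MemLp (fun ω => ∑ i, u i * X ω i) p μ :=
  memLp_finsetSum _ fun i _ => (hX i).const_mul (u i)

theorem condExp_sum_mul {X : Ω → ι → ℝ} (hX : ∀ i, Integrable (fun ω => X ω i) μ) (u : ι → ℝ) :
    μ[fun ω => ∑ i, u i * X ω i | m] =ᵐ[μ] fun ω => ∑ i, u i * μ[fun ω' => X ω' i | m] ω := by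
  have hsum : (fun ω => ∑ i, u i * X ω i) = ∑ i, u i • fun ω => X ω i := by
    ext ω
    simp
  have hsmul : ∀ᵐ ω ∂μ, ∀ i, μ[u i • fun ω' => X ω' i | m] ω = u i * μ[fun ω' => X ω' i | m] ω :=
    ae_all_iff.mpr fun i => condExp_smul (u i) _ m
  rw [hsum]
  filter_upwards [condExp_finsetSum (fun i _ => (hX i).smul (u i)) m, hsmul] with ω hω hωi
  rw [hω, Finset.sum_apply]
  exact Finset.sum_congr rfl fun i _ => hωi i

theorem sum_mul_sub_condExp_ae_eq_zero (hm : m ≤ m₀) [SigmaFinite (μ.trim hm)]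
    {X : Ω → ι → ℝ} (hX : ∀ i, Integrable (fun ω => X ω i) μ) {u : ι → ℝ}
    (hu : AEStronglyMeasurable[m] (fun ω => ∑ i, u i * X ω i) μ) :
    (fun ω => ∑ i, u i * (X ω i - μ[fun ω' => X ω' i | m] ω)) =ᵐ[μ] 0 := by
  have hself := condExp_of_aestronglyMeasurable' hm hu (integrable_finsetSum _ fun i _ =>
    (hX i).const_mul (u i))
  filter_upwards [hself, condExp_sum_mul (m := m) hX u] with ω hω hωsum
  simp only [mul_sub, Finset.sum_sub_distrib, Pi.zero_apply]
  rw [← hωsum, hω, sub_self]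

end

theorem stacked_covariance_posDef_general
    {Ω : Type*} [MeasurableSpace Ω] (P : Measure Ω) [IsProbabilityMeasure P]
    {p q : ℕ} (X : Ω → Fin p → ℝ) (Z : Ω → Fin q → ℝ)
    (hZ : Measurable Z)
    (hXL2 : ∀ i, MemLp (fun ω => X ω i) 2 P)
    (hZL2 : ∀ j, MemLp (fun ω => Z ω j) 2 P)
    (hac : (P.map Z).AbsolutelyContinuous (volume : Measure (Fin q → ℝ)))
    (hvar : ∀ u : Fin p → ℝ, u ≠ 0 →
      0 < variance (fun ω => ∑ i, u i *
        (X ω i - (P[(fun ω' => X ω' i) | MeasurableSpace.comap Z inferInstance]) ω)) P) :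
    ∀ (u : Fin p → ℝ) (v : Fin q → ℝ), (u, v) ≠ 0 →
      0 < variance (fun ω => (∑ i, u i * X ω i) + ∑ j, v j * Z ω j) P := by
  intro u v huv
  set W := fun ω => (∑ i, u i * X ω i) + ∑ j, v j * Z ω j
  refine (variance_nonneg W P).lt_of_ne' fun hW => ?_
  have hconst : ∀ᵐ ω ∂P, W ω = P[W] := ae_eq_integral_of_variance_eq_zero
    ((memLp_sum_mul hXL2 u).add (memLp_sum_mul hZL2 v)) hW
  by_cases hu : u = 0
  · have hv : v ≠ 0 := by
      rintro rfl
      exact huv (by simp [hu])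
    obtain ⟨ω, hωc, hωne⟩ :=
      (hconst.and (ae_dotProduct_ne_of_absolutelyContinuous hZ.aemeasurable hac hv P[W])).exists
    exact hωne (by simpa [W, hu] using hωc)
  · have hXσZ : AEStronglyMeasurable[MeasurableSpace.comap Z inferInstance]
        (fun ω => ∑ i, u i * X ω i) P := by
      refine ⟨fun ω => P[W] - ∑ j, v j * Z ω j, ?_, ?_⟩
      · have hdot : Measurable fun z : Fin q → ℝ => P[W] - ∑ j, v j * z j := by fun_prop
        exact (hdot.comp (comap_measurable Z)).stronglyMeasurable
      · filter_upwards [hconst] with ω hω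
        rw [← hω]
        simp [W]
    refine (hvar u hu).ne' ?_
    rw [variance_congr (sum_mul_sub_condExp_ae_eq_zero hZ.comap_le
      (fun i => (hXL2 i).integrable one_le_two) hXσZ), variance_zero]

/-- If the law of `Z` is absolutely continuous w.r.t. Lebesgue measure on `ℝ^q` and the
conditional covariance of `X` given `Z` is nondegenerate (every nontrivial linear
combination of the coordinates of `X - E[X | σ(Z)]` has positive variance), then the
covariance matrix of the stacked vector `(Xᵀ, Zᵀ)ᵀ` is positive definite: every
nontrivial linear combination `⟨u, X⟩ + ⟨v, Z⟩` has positive variance. -/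
theorem stacked_covariance_posDef
    {Ω : Type*} [MeasurableSpace Ω] (P : Measure Ω) [IsProbabilityMeasure P]
    {p q : ℕ} (X : Ω → Fin p → ℝ) (Z : Ω → Fin q → ℝ)
    (hX : Measurable X) (hZ : Measurable Z)
    (hXL2 : ∀ i, MemLp (fun ω => X ω i) 2 P)
    (hZL2 : ∀ j, MemLp (fun ω => Z ω j) 2 P)
    (hac : (P.map Z).AbsolutelyContinuous (volume : Measure (Fin q → ℝ)))
    (hvar : ∀ u : Fin p → ℝ, u ≠ 0 →
      0 < variance (fun ω => ∑ i, u i *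
        (X ω i - (P[(fun ω' => X ω' i) | MeasurableSpace.comap Z inferInstance]) ω)) P) :
    ∀ (u : Fin p → ℝ) (v : Fin q → ℝ), (u, v) ≠ 0 →
      0 < variance (fun ω => (∑ i, u i * X ω i) + ∑ j, v j * Z ω j) P :=
  stacked_covariance_posDef_general P X Z hZ hXL2 hZL2 hac hvar
end

section
/- Let m ≥ 1, let d ∈ ℝ^m have strictly positive entries, let μ be a probability measure on ℝ^m, and let h : ℝ^m → ℝ be μ-integrable. Then the double integral I = ∫_{ℝ^m} ∫_{ℝ^m} h(x) · h(y) · exp(−∑_{k=1}^m d_k (x_k − y_k)²) dμ(x) dμ(y) is well defined and satisfies I ≥ 0; moreover I = 0 if and only if h = 0 μ-almost everywhere. -/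
/-!
The Gaussian kernel `exp (-∑ k, d k * v k ^ 2)` is the Fourier transform of the centred Gaussian
measure `γ` on `ℝ^m` with independent coordinates of variances `2 d k`. By Fubini the double
integral is therefore `∫ |ĥ t|² dγ(t)`, where `ĥ` is the Fourier transform of the signed measure
`h • μ`; so it is nonnegative, and it vanishes only if `ĥ = 0` `γ`-a.e., hence everywhere, since
`ĥ` is continuous and `γ` charges every open set. Then the finite measures `h⁺ • μ` and `h⁻ • μ`
have the same characteristic function, so they are equal and `h = 0` `μ`-a.e.
-/

open MeasureTheory ProbabilityTheory Complex
open scoped ComplexConjugate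

lemma MeasureTheory.Integrable.ofReal_mul_cexp_mul_I {α : Type*} [MeasurableSpace α]
    {μ : Measure α} {h : α → ℝ} (hh : Integrable h μ) {φ : α → ℝ}
    (hφ : AEStronglyMeasurable φ μ) :
    Integrable (fun x => (h x : ℂ) * cexp (φ x * I)) μ :=
  hh.ofReal.mul_bdd (by fun_prop) (ae_of_all _ fun x => (norm_exp_ofReal_mul_I (φ x)).le)

section WithDensity

variable {E : Type*} [NormedAddCommGroup E] [NormedSpace ℝ E] [MeasurableSpace E]
  {μ : Measure E} {h : E → ℝ}

lemma charFunDual_withDensity_ofReal (hh : AEMeasurable h μ) (L : StrongDual ℝ E) :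
    charFunDual (μ.withDensity fun x => ENNReal.ofReal (h x)) L =
      ∫ x, (max (h x) 0 : ℝ) * cexp (L x * I) ∂μ := by
  rw [charFunDual_apply, integral_withDensity_eq_integral_toReal_smul₀ hh.ennreal_ofReal
    (ae_of_all _ fun _ => ENNReal.ofReal_lt_top)]
  simp only [ENNReal.toReal_ofReal', Complex.real_smul]

lemma ae_eq_zero_of_forall_integral_mul_cexp_eq_zero [CompleteSpace E] [BorelSpace E]
    [SecondCountableTopology E] [IsFiniteMeasure μ] (hh : Integrable h μ)
    (h0 : ∀ L : StrongDual ℝ E, ∫ x, h x * cexp (L x * I) ∂μ = 0) : h =ᵐ[μ] 0 := by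
  have : IsFiniteMeasure (μ.withDensity fun x => ENNReal.ofReal (h x)) :=
    isFiniteMeasure_withDensity_ofReal hh.2
  have : IsFiniteMeasure (μ.withDensity fun x => ENNReal.ofReal (-h x)) :=
    isFiniteMeasure_withDensity_ofReal hh.fun_neg.2
  have hchar : charFunDual (μ.withDensity fun x => ENNReal.ofReal (h x)) =
      charFunDual (μ.withDensity fun x => ENNReal.ofReal (-h x)) := by
    funext L
    have hL : AEStronglyMeasurable (fun x => L x) μ := L.continuous.aestronglyMeasurable
    rw [charFunDual_withDensity_ofReal hh.aemeasurable,
      charFunDual_withDensity_ofReal hh.fun_neg.aemeasurable, ← sub_eq_zero,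
      ← integral_sub (hh.pos_part.ofReal_mul_cexp_mul_I hL)
        (hh.fun_neg.pos_part.ofReal_mul_cexp_mul_I hL), ← h0 L]
    congr 1 with x
    rw [← sub_mul, ← ofReal_sub, max_zero_sub_max_neg_zero_eq_self]
  have hdens := (withDensity_eq_iff_of_sigmaFinite hh.aemeasurable.ennreal_ofReal
    hh.fun_neg.aemeasurable.ennreal_ofReal).1 (Measure.ext_of_charFunDual hchar)
  filter_upwards [hdens] with x hx
  have hmax := congrArg ENNReal.toReal hx
  simp only [ENNReal.toReal_ofReal'] at hmax
  rw [Pi.zero_apply, ← max_zero_sub_max_neg_zero_eq_self (h x), hmax, sub_self]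

end WithDensity

section CharFunDensity

variable {ι : Type*} [Fintype ι] {μ : Measure (ι → ℝ)} {h : (ι → ℝ) → ℝ}

noncomputable def charFunDensity (μ : Measure (ι → ℝ)) (h : (ι → ℝ) → ℝ) (t : ι → ℝ) : ℂ :=
  ∫ x, h x * cexp ((t ⬝ᵥ x : ℝ) * I) ∂μ

lemma StrongDual.apply_eq_dotProduct [DecidableEq ι] (L : StrongDual ℝ (ι → ℝ)) (x : ι → ℝ) :
    L x = (fun i => L (Pi.single i 1)) ⬝ᵥ x := by
  conv_lhs => rw [← Finset.univ_sum_single x]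
  simp only [map_sum, dotProduct]
  refine Finset.sum_congr rfl fun i _ => ?_
  rw [mul_comm, ← smul_eq_mul, ← map_smul, ← Pi.single_smul, smul_eq_mul, mul_one]

lemma charFunDensity_eq_zero_iff [IsFiniteMeasure μ] (hh : Integrable h μ) :
    charFunDensity μ h = 0 ↔ h =ᵐ[μ] 0 := by
  classical
  refine ⟨fun h0 => ae_eq_zero_of_forall_integral_mul_cexp_eq_zero hh fun L => ?_,
    fun h0 => funext fun t => integral_eq_zero_of_ae ?_⟩
  · simpa only [charFunDensity, ← StrongDual.apply_eq_dotProduct, Pi.zero_apply] using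
      congrFun h0 (fun i => L (Pi.single i 1))
  · filter_upwards [h0] with x hx
    simp only [hx, Pi.zero_apply, ofReal_zero, zero_mul]

lemma norm_charFunDensity_le (t : ι → ℝ) : ‖charFunDensity μ h t‖ ≤ ∫ x, |h x| ∂μ := by
  refine (norm_integral_le_integral_norm _).trans_eq (integral_congr_ae (ae_of_all _ fun x => ?_))
  simp [norm_exp_ofReal_mul_I]

lemma continuous_charFunDensity (hh : Integrable h μ) : Continuous (charFunDensity μ h) := by
  refine continuous_of_dominated (bound := fun x => |h x|)
    (fun t => (hh.ofReal_mul_cexp_mul_I (by fun_prop)).1) (fun t => ae_of_all _ fun x => ?_)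
    hh.abs (ae_of_all _ fun x => by fun_prop)
  rw [norm_mul, norm_exp_ofReal_mul_I, mul_one, norm_real, Real.norm_eq_abs]

lemma mul_cexp_mul_conj_mul_cexp (a b : ℝ) (t x y : ι → ℝ) :
    (a * cexp ((t ⬝ᵥ x : ℝ) * I)) * conj (b * cexp ((t ⬝ᵥ y : ℝ) * I)) =
      ((a * b : ℝ) : ℂ) * cexp ((t ⬝ᵥ (x - y) : ℝ) * I) := by
  rw [ofReal_mul, map_mul, conj_ofReal, ← exp_conj, map_mul, conj_ofReal, conj_I, dotProduct_sub,
    ofReal_sub, sub_mul, exp_sub, mul_neg, exp_neg]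
  ring

/-- The easy half of Bochner's theorem: the Fourier transform of a finite positive measure is a
positive-definite kernel. -/
lemma integral_integral_mul_mul_integral_cexp_eq_integral_normSq [IsFiniteMeasure μ]
    (hh : Integrable h μ) (γ : Measure (ι → ℝ)) [IsFiniteMeasure γ] :
    ∫ x, ∫ y, (h x * h y : ℂ) * ∫ t, cexp ((t ⬝ᵥ (x - y) : ℝ) * I) ∂γ ∂μ ∂μ =
      ∫ t, (normSq (charFunDensity μ h t) : ℂ) ∂γ := by
  set F : ((ι → ℝ) × (ι → ℝ)) × (ι → ℝ) → ℂ :=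
    fun p => (h p.1.1 * h p.1.2 : ℝ) * cexp ((p.2 ⬝ᵥ (p.1.1 - p.1.2) : ℝ) * I)
  have hF : Integrable F ((μ.prod μ).prod γ) :=
    ((hh.mul_prod hh).comp_fst γ).ofReal_mul_cexp_mul_I (by fun_prop)
  have hslice (t : ι → ℝ) : ∫ z, F (z, t) ∂(μ.prod μ) = normSq (charFunDensity μ h t) := by
    simp only [F, ← mul_conj, charFunDensity, ← integral_conj, ← integral_prod_mul,
      mul_cexp_mul_conj_mul_cexp]
  calc ∫ x, ∫ y, (h x * h y : ℂ) * ∫ t, cexp ((t ⬝ᵥ (x - y) : ℝ) * I) ∂γ ∂μ ∂μ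
      = ∫ x, ∫ y, ∫ t, F ((x, y), t) ∂γ ∂μ ∂μ := by simp only [F, integral_const_mul, ofReal_mul]
    _ = ∫ z, ∫ t, F (z, t) ∂γ ∂(μ.prod μ) := integral_integral hF.integral_prod_left
    _ = ∫ t, ∫ z, F (z, t) ∂(μ.prod μ) ∂γ := integral_integral_swap hF
    _ = ∫ t, (normSq (charFunDensity μ h t) : ℂ) ∂γ := by simp only [hslice]

end CharFunDensity

section GaussianPi

variable {ι : Type*} [Fintype ι]

/-- The variances are `2 d k` so that the Fourier transform is `exp (-∑ k, d k * v k ^ 2)`. -/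
noncomputable def gaussianPi (d : ι → ℝ) : Measure (ι → ℝ) :=
  Measure.pi fun k => gaussianReal 0 (2 * d k).toNNReal

instance (d : ι → ℝ) : IsProbabilityMeasure (gaussianPi d) := by
  unfold gaussianPi; infer_instance

lemma isOpenPosMeasure_gaussianPi {d : ι → ℝ} (hd : ∀ k, 0 < d k) :
    (gaussianPi d).IsOpenPosMeasure := by
  have (k : ι) : (gaussianReal 0 (2 * d k).toNNReal).IsOpenPosMeasure :=
    (gaussianReal_absolutelyContinuous' 0 (by simpa using hd k)).isOpenPosMeasure
  unfold gaussianPi; infer_instance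

lemma integral_cexp_dotProduct_gaussianPi {d : ι → ℝ} (hd : ∀ k, 0 ≤ d k) (v : ι → ℝ) :
    ∫ t, cexp ((t ⬝ᵥ v : ℝ) * I) ∂gaussianPi d = Real.exp (-∑ k, d k * v k ^ 2) := by
  have hfactor (k : ι) : ∫ s, cexp ((s * v k : ℝ) * I) ∂gaussianReal 0 (2 * d k).toNNReal =
      cexp (-(d k * v k ^ 2 : ℝ)) := by
    simp_rw [mul_comm _ (v k), ofReal_mul, ← charFun_apply_real, charFun_gaussianReal,
      Real.coe_toNNReal _ (mul_nonneg zero_le_two (hd k))]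
    push_cast
    ring_nf
  simp_rw [dotProduct, ofReal_sum, Finset.sum_mul, exp_sum]
  rw [gaussianPi, integral_fintype_prod_eq_prod (fun k s => cexp ((s * v k : ℝ) * I))]
  simp only [hfactor, ← exp_sum, ofReal_exp, ofReal_neg, ofReal_sum, Finset.sum_neg_distrib]

end GaussianPi

section GaussianKernel

variable {ι : Type*} [Fintype ι] {μ : Measure (ι → ℝ)} {h : (ι → ℝ) → ℝ} {d : ι → ℝ}

lemma integrable_mul_mul_exp_neg_sum (hh : Integrable h μ) (hd : ∀ k, 0 ≤ d k) :
    Integrable (fun xy : (ι → ℝ) × (ι → ℝ) =>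
      h xy.1 * h xy.2 * Real.exp (-∑ k, d k * (xy.1 k - xy.2 k) ^ 2)) (μ.prod μ) := by
  refine (hh.mul_prod hh).mul_bdd (c := 1) (by fun_prop) (ae_of_all _ fun xy => ?_)
  rw [Real.norm_of_nonneg (Real.exp_nonneg _), Real.exp_le_one_iff, neg_nonpos]
  exact Finset.sum_nonneg fun k _ => mul_nonneg (hd k) (sq_nonneg _)

lemma integral_integral_mul_mul_exp_neg_sum [IsFiniteMeasure μ] (hh : Integrable h μ)
    (hd : ∀ k, 0 ≤ d k) :
    ∫ x, ∫ y, h x * h y * Real.exp (-∑ k, d k * (x k - y k) ^ 2) ∂μ ∂μ =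
      ∫ t, normSq (charFunDensity μ h t) ∂gaussianPi d := by
  have := integral_integral_mul_mul_integral_cexp_eq_integral_normSq hh (gaussianPi d)
  simp only [integral_cexp_dotProduct_gaussianPi hd, Pi.sub_apply] at this
  exact_mod_cast this

lemma integral_normSq_charFunDensity_eq_zero_iff [IsFiniteMeasure μ] (hh : Integrable h μ)
    (γ : Measure (ι → ℝ)) [IsFiniteMeasure γ] [γ.IsOpenPosMeasure] :
    ∫ t, normSq (charFunDensity μ h t) ∂γ = 0 ↔ h =ᵐ[μ] 0 := by
  have hcont : Continuous fun t => normSq (charFunDensity μ h t) :=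
    continuous_normSq.comp (continuous_charFunDensity hh)
  have hbound (t : ι → ℝ) : ‖normSq (charFunDensity μ h t)‖ ≤ (∫ x, |h x| ∂μ) ^ 2 := by
    rw [Real.norm_of_nonneg (normSq_nonneg _), normSq_eq_norm_sq]
    exact pow_le_pow_left₀ (norm_nonneg _) (norm_charFunDensity_le t) 2
  rw [integral_eq_zero_iff_of_nonneg (fun t => normSq_nonneg _)
      (.of_bound hcont.aestronglyMeasurable _ (ae_of_all _ hbound)),
    hcont.ae_eq_iff_eq γ continuous_zero, ← charFunDensity_eq_zero_iff hh]
  simp only [funext_iff, Pi.zero_apply, map_eq_zero]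

end GaussianKernel

theorem gaussian_double_integral_nonneg_eq_zero_iff_general
    (m : ℕ) (d : Fin m → ℝ) (hd : ∀ k, 0 < d k)
    (μ : Measure (Fin m → ℝ)) [IsProbabilityMeasure μ]
    (h : (Fin m → ℝ) → ℝ) (hInt : Integrable h μ) :
    Integrable (fun xy : (Fin m → ℝ) × (Fin m → ℝ) =>
      h xy.1 * h xy.2 * Real.exp (-∑ k, d k * (xy.1 k - xy.2 k) ^ 2)) (μ.prod μ) ∧
    0 ≤ ∫ x, ∫ y, h x * h y * Real.exp (-∑ k, d k * (x k - y k) ^ 2) ∂μ ∂μ ∧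
    ((∫ x, ∫ y, h x * h y * Real.exp (-∑ k, d k * (x k - y k) ^ 2) ∂μ ∂μ) = 0 ↔
      h =ᵐ[μ] 0) := by
  have hd' (k : Fin m) : 0 ≤ d k := (hd k).le
  have := isOpenPosMeasure_gaussianPi hd
  rw [integral_integral_mul_mul_exp_neg_sum hInt hd']
  exact ⟨integrable_mul_mul_exp_neg_sum hInt hd', integral_nonneg fun t => normSq_nonneg _,
    integral_normSq_charFunDensity_eq_zero_iff hInt _⟩

/-- SmoothMD identification device: for a probability measure `μ` on `ℝ^m`, a
`μ`-integrable `h`, and strictly positive weights `d`, the double integral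
`I = ∬ h(x)h(y)exp(-∑ₖ dₖ(xₖ - yₖ)²) dμ(x)dμ(y)` is well defined, nonnegative, and
vanishes iff `h = 0` `μ`-a.e. -/
theorem gaussian_double_integral_nonneg_eq_zero_iff
    (m : ℕ) (hm : 1 ≤ m) (d : Fin m → ℝ) (hd : ∀ k, 0 < d k)
    (μ : Measure (Fin m → ℝ)) [IsProbabilityMeasure μ]
    (h : (Fin m → ℝ) → ℝ) (hInt : Integrable h μ) :
    Integrable (fun xy : (Fin m → ℝ) × (Fin m → ℝ) =>
      h xy.1 * h xy.2 * Real.exp (-∑ k, d k * (xy.1 k - xy.2 k) ^ 2)) (μ.prod μ) ∧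
    0 ≤ ∫ x, ∫ y, h x * h y * Real.exp (-∑ k, d k * (x k - y k) ^ 2) ∂μ ∂μ ∧
    ((∫ x, ∫ y, h x * h y * Real.exp (-∑ k, d k * (x k - y k) ^ 2) ∂μ ∂μ) = 0 ↔
      h =ᵐ[μ] 0) :=
  gaussian_double_integral_nonneg_eq_zero_iff_general m d hd μ h hInt
end
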